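/- arXiv:1404.6233 — 15 statements merged into one kernel-verified Lean document; each statement's English description precedes it below -/
import Mathlib

section
/- Let a, b, c, d be four distinct points on a common circle in the Euclidean plane such that b and c lie strictly on the same side of the line through a and d, and such that the unsigned angles satisfy ∠cad ≤ ∠bad ≤ ∠adc. Then |ac| + |cd| ≤ |ab| + |bd|. -/
open EuclideanGeometry Module

/-! The chords `ac, cd, ab, bd` subtend the inscribed angles `∠adc, ∠cad, ∠adb, ∠bad`, so each
has length `2r sin` of that angle. Since `b` and `c` see the chord `ad` under the same inscribed
angle, the angle sums of the triangles `abd` and `acd` give `∠bad + ∠adb = ∠cad + ∠adc`, and the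
hypothesis says that the pair `(∠cad, ∠adc)` is more spread out than `(∠bad, ∠adb)`. Concavity of
`sin` on `[0, π]` then gives the inequality. -/

theorem ConcaveOn.map_add_map_le_of_add_eq {s : Set ℝ} {f : ℝ → ℝ} (hf : ConcaveOn ℝ s f)
    {α β γ δ : ℝ} (hγ : γ ∈ s) (hδ : δ ∈ s) (hγα : γ ≤ α) (hαδ : α ≤ δ)
    (hsum : α + β = γ + δ) : f γ + f δ ≤ f α + f β := by
  obtain hγδ | hγδ := (hγα.trans hαδ).eq_or_lt
  · obtain rfl : α = γ := le_antisymm (hγδ ▸ hαδ) hγα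
    obtain rfl : β = δ := by linarith
    rfl
  -- `α` and `β` are the combinations of `γ, δ` with the weights `t, 1 - t` swapped.
  set t := (δ - α) / (δ - γ)
  have ht₀ : 0 ≤ t := div_nonneg (by linarith) (by linarith)
  have ht₁ : 0 ≤ 1 - t := by
    rw [sub_nonneg, div_le_one (by linarith)]
    linarith
  have hα : t • γ + (1 - t) • δ = α := by
    simp only [smul_eq_mul, t]
    field_simp
    ring
  have hβ : (1 - t) • γ + t • δ = β := by
    simp only [smul_eq_mul] at hα ⊢
    linarith
  have hfα := hf.2 hγ hδ ht₀ ht₁ (add_sub_cancel t 1)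
  have hfβ := hf.2 hγ hδ ht₁ ht₀ (sub_add_cancel 1 t)
  rw [hα] at hfα
  rw [hβ] at hfβ
  simp only [smul_eq_mul] at hfα hfβ
  linarith

theorem Real.sin_add_sin_le_sin_add_sin {α β γ δ : ℝ} (hγ : 0 ≤ γ) (hδ : δ ≤ Real.pi)
    (hγα : γ ≤ α) (hαδ : α ≤ δ) (hsum : α + β = γ + δ) :
    Real.sin γ + Real.sin δ ≤ Real.sin α + Real.sin β :=
  strictConcaveOn_sin_Icc.concaveOn.map_add_map_le_of_add_eq
    ⟨hγ, by linarith⟩ ⟨by linarith, hδ⟩ hγα hαδ hsum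

namespace EuclideanGeometry.Sphere

variable {V P : Type*} [NormedAddCommGroup V] [InnerProductSpace ℝ V] [MetricSpace P]
  [NormedAddTorsor V P] [Fact (finrank ℝ V = 2)]

attribute [local instance] FiniteDimensional.of_fact_finrank_eq_two

theorem dist_eq_two_mul_radius_mul_sin_angle {s : Sphere P} {p₁ p₂ p₃ : P}
    (hp₁ : p₁ ∈ s) (hp₂ : p₂ ∈ s) (hp₃ : p₃ ∈ s) (hp₁p₂ : p₁ ≠ p₂) (hp₂p₃ : p₂ ≠ p₃) :
    dist p₁ p₃ = 2 * s.radius * Real.sin (∠ p₁ p₂ p₃) := by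
  obtain rfl | hp₁p₃ := eq_or_ne p₁ p₃
  · simp [angle_self_of_ne hp₁p₂]
  let _ : Module.Oriented ℝ V (Fin 2) := ⟨(finBasisOfFinrankEq ℝ V Fact.out).orientation⟩
  have hsin : Real.sin (∠ p₁ p₂ p₃) = |(∡ p₁ p₂ p₃).sin| := by
    rw [angle_eq_abs_oangle_toReal hp₁p₂ hp₂p₃.symm,
      ← Real.abs_sin_eq_sin_abs_of_abs_le_pi (Real.Angle.abs_toReal_le_pi _),
      Real.Angle.sin_toReal]
  have hindep : AffineIndependent ℝ ![p₁, p₂, p₃] :=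
    (s.cospherical.subset (by simp [Set.insert_subset_iff, hp₁, hp₂, hp₃])).affineIndependent_of_ne
      hp₁p₂ hp₁p₃ hp₂p₃
  have hne : |(∡ p₁ p₂ p₃).sin| ≠ 0 :=
    abs_ne_zero.2 (Real.Angle.sin_ne_zero_iff.2
      (oangle_ne_zero_and_ne_pi_iff_affineIndependent.2 hindep))
  rw [hsin, ← div_eq_iff hne]
  exact dist_div_sin_oangle_eq_two_mul_radius hp₁ hp₂ hp₃ hp₁p₂ hp₁p₃ hp₂p₃

theorem angle_eq_of_sSameSide {s : Sphere P} {p₁ p₂ p₃ p₄ : P}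
    (hp₁ : p₁ ∈ s) (hp₂ : p₂ ∈ s) (hp₃ : p₃ ∈ s) (hp₄ : p₄ ∈ s)
    (hs : line[ℝ, p₁, p₄].SSameSide p₂ p₃) : ∠ p₁ p₂ p₄ = ∠ p₁ p₃ p₄ := by
  have hp₁ₗ : p₁ ∈ line[ℝ, p₁, p₄] := left_mem_affineSpan_pair ℝ p₁ p₄
  have hp₄ₗ : p₄ ∈ line[ℝ, p₁, p₄] := right_mem_affineSpan_pair ℝ p₁ p₄
  have hp₂p₁ : p₂ ≠ p₁ := fun h => hs.2.1 (h ▸ hp₁ₗ)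
  have hp₂p₄ : p₂ ≠ p₄ := fun h => hs.2.1 (h ▸ hp₄ₗ)
  have hp₃p₁ : p₃ ≠ p₁ := fun h => hs.2.2 (h ▸ hp₁ₗ)
  have hp₃p₄ : p₃ ≠ p₄ := fun h => hs.2.2 (h ▸ hp₄ₗ)
  obtain rfl | hp₁p₄ := eq_or_ne p₁ p₄
  · rw [angle_self_of_ne hp₂p₁.symm, angle_self_of_ne hp₃p₁.symm]
  let _ : Module.Oriented ℝ V (Fin 2) := ⟨(finBasisOfFinrankEq ℝ V Fact.out).orientation⟩
  have hsign : (∡ p₁ p₂ p₄).sign ≠ 0 := by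
    rw [Ne, oangle_sign_eq_zero_iff_collinear]
    exact fun h => hs.2.1 (h.mem_affineSpan_of_mem_of_ne (by simp) (by simp) (by simp) hp₁p₄)
  have hoangle : ∡ p₁ p₂ p₄ = ∡ p₁ p₃ p₄ :=
    (Real.Angle.two_zsmul_eq_iff_eq hsign (hs.oangle_sign_eq hp₁ₗ hp₄ₗ).symm).1
      (two_zsmul_oangle_eq hp₁ hp₂ hp₃ hp₄ hp₂p₁ hp₂p₄ hp₃p₁ hp₃p₄)
  rw [angle_eq_abs_oangle_toReal hp₂p₁.symm hp₂p₄.symm,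
    angle_eq_abs_oangle_toReal hp₃p₁.symm hp₃p₄.symm,
    hoangle]

end EuclideanGeometry.Sphere

theorem four_points_on_circle_path_le_general
    (a b c d o : EuclideanSpace ℝ (Fin 2)) (r : ℝ)
    (ha : dist a o = r) (hb : dist b o = r) (hc : dist c o = r) (hd : dist d o = r)
    (hab : a ≠ b) (hac : a ≠ c) (had : a ≠ d)
    (hbd : b ≠ d) (hcd : c ≠ d)
    (hside : (affineSpan ℝ ({a, d} : Set (EuclideanSpace ℝ (Fin 2)))).SSameSide b c)
    (h1 : ∠ c a d ≤ ∠ b a d) (h2 : ∠ b a d ≤ ∠ a d c) :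
    dist a c + dist c d ≤ dist a b + dist b d := by
  have : Fact (finrank ℝ (EuclideanSpace ℝ (Fin 2)) = 2) := ⟨finrank_euclideanSpace_fin⟩
  let s : Sphere (EuclideanSpace ℝ (Fin 2)) := ⟨o, r⟩
  have haS : a ∈ s := mem_sphere.2 ha
  have hbS : b ∈ s := mem_sphere.2 hb
  have hcS : c ∈ s := mem_sphere.2 hc
  have hdS : d ∈ s := mem_sphere.2 hd
  have hinscribed : ∠ a b d = ∠ a c d := Sphere.angle_eq_of_sSameSide haS hbS hcS hdS hside
  have hsum : ∠ b a d + ∠ a d b = ∠ c a d + ∠ a d c := by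
    have hb_sum := angle_add_angle_add_angle_eq_pi d hab.symm
    have hc_sum := angle_add_angle_add_angle_eq_pi d hac.symm
    rw [angle_comm b d a, angle_comm d a b] at hb_sum
    rw [angle_comm c d a, angle_comm d a c] at hc_sum
    linarith
  have hsin := Real.sin_add_sin_le_sin_add_sin (angle_nonneg c a d) (angle_le_pi a d c) h1 h2 hsum
  have hr : 0 ≤ 2 * r := by linarith [ha ▸ dist_nonneg (x := a) (y := o)]
  rw [Sphere.dist_eq_two_mul_radius_mul_sin_angle haS hdS hcS had hcd.symm,
    Sphere.dist_eq_two_mul_radius_mul_sin_angle hcS haS hdS hac.symm had,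
    Sphere.dist_eq_two_mul_radius_mul_sin_angle haS hdS hbS had hbd.symm,
    Sphere.dist_eq_two_mul_radius_mul_sin_angle hbS haS hdS hab.symm had]
  linarith [mul_le_mul_of_nonneg_left hsin hr]

/-- If `a`, `b`, `c`, `d` are four distinct points on a common circle such that `b` and `c`
lie strictly on the same side of the line through `a` and `d`, and the unsigned angles
satisfy `∠ c a d ≤ ∠ b a d ≤ ∠ a d c`, then `|ac| + |cd| ≤ |ab| + |bd|`. -/
theorem four_points_on_circle_path_le
    (a b c d o : EuclideanSpace ℝ (Fin 2)) (r : ℝ) (hr : 0 < r)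
    (ha : dist a o = r) (hb : dist b o = r) (hc : dist c o = r) (hd : dist d o = r)
    (hab : a ≠ b) (hac : a ≠ c) (had : a ≠ d)
    (hbc : b ≠ c) (hbd : b ≠ d) (hcd : c ≠ d)
    (hside : (affineSpan ℝ ({a, d} : Set (EuclideanSpace ℝ (Fin 2)))).SSameSide b c)
    (h1 : ∠ c a d ≤ ∠ b a d) (h2 : ∠ b a d ≤ ∠ a d c) :
    dist a c + dist c d ≤ dist a b + dist b d :=
  four_points_on_circle_path_le_general a b c d o r ha hb hc hd hab hac had hbd hcd hside h1 h2
end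

section
/- Let θ, β, γ, c be real numbers with 0 < θ ≤ 2π/7, 0 < β < (π − θ)/2, 0 ≤ γ < θ/2. If c ≥ (cos γ − sin β) / (cos(θ/2 − β) − sin(θ/2 + γ)), then cos γ + c · sin(θ/2 + γ) ≤ sin β + c · cos(θ/2 − β). -/
open Real

theorem calculation_case
    (θ β γ c : ℝ) (hθ0 : 0 < θ) (hθ : θ ≤ 2 * π / 7)
    (hβ0 : 0 < β) (hβ : β < (π - θ) / 2)
    (hγ0 : 0 ≤ γ) (hγ : γ < θ / 2)
    (hc : c ≥ (cos γ - sin β) / (cos (θ / 2 - β) - sin (θ / 2 + γ))) :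
    cos γ + c * sin (θ / 2 + γ) ≤ sin β + c * cos (θ / 2 - β) := by
  have hπ := pi_pos
  have hkey : sin (θ / 2 + γ) < cos (θ / 2 - β) := by
    rw [← cos_abs (θ / 2 - β), show θ / 2 + γ = π / 2 - (π / 2 - (θ / 2 + γ)) by ring,
      sin_pi_div_two_sub]
    have h1 : π / 2 - (θ / 2 + γ) ∈ Set.Icc 0 π := by constructor <;> nlinarith
    have h2 : |θ / 2 - β| ∈ Set.Icc 0 π := by
      constructor
      · exact abs_nonneg _
      · rcases abs_cases (θ / 2 - β) with ⟨h, _⟩ | ⟨h, _⟩ <;> rw [h] <;> nlinarith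
    refine strictAntiOn_cos h2 h1 ?_
    rcases abs_cases (θ / 2 - β) with ⟨h, _⟩ | ⟨h, _⟩ <;> rw [h] <;> nlinarith
  have hD : 0 < cos (θ / 2 - β) - sin (θ / 2 + γ) := by linarith
  have := (div_le_iff₀ hD).mp hc
  nlinarith
end

section
/- Let θ be a real number with 0 < θ ≤ π/3. The function f(α) = ((1 + sin(θ/2)) / cos(θ/2)) · cos α + sin α is monotonically increasing on the interval [0, θ/2], and f(θ/2) = 1 + 2 sin(θ/2). In particular, for every α ∈ [0, θ/2], ((1 + sin(θ/2)) / cos(θ/2)) · cos α + sin α ≤ 1 + 2 sin(θ/2). -/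
open Real Set

theorem theta4kplus2_bound_maximized
    (θ : ℝ) (hθ0 : 0 < θ) (hθ : θ ≤ π / 3) :
    MonotoneOn (fun α : ℝ => ((1 + sin (θ / 2)) / cos (θ / 2)) * cos α + sin α)
        (Icc 0 (θ / 2)) ∧
      ((1 + sin (θ / 2)) / cos (θ / 2)) * cos (θ / 2) + sin (θ / 2) = 1 + 2 * sin (θ / 2) ∧
      ∀ α ∈ Icc (0 : ℝ) (θ / 2),
        ((1 + sin (θ / 2)) / cos (θ / 2)) * cos α + sin α ≤ 1 + 2 * sin (θ / 2) := by
  set t := θ / 2 with ht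
  have ht0 : 0 < t := by rw [ht]; linarith
  have hπ : (0:ℝ) < π := Real.pi_pos
  have ht6 : t ≤ π / 6 := by rw [ht]; linarith
  have hcost : 0 < cos t := Real.cos_pos_of_mem_Ioo ⟨by linarith, by linarith⟩
  set c := (1 + sin t) / cos t with hc
  have key : ∀ α ∈ Icc (0:ℝ) t, 0 ≤ cos α - c * sin α := by
    rintro α ⟨hα0, hαt⟩
    have hsin : 0 ≤ sin α := Real.sin_nonneg_of_nonneg_of_le_pi hα0 (by linarith)
    have h1 : sin α ≤ cos (α + t) := by
      rw [← Real.cos_pi_div_two_sub α]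
      exact Real.cos_le_cos_of_nonneg_of_le_pi (by linarith) (by linarith) (by linarith)
    have h2 : cos (α + t) = cos α * cos t - sin α * sin t := Real.cos_add α t
    have hle : c * sin α ≤ cos α := by
      rw [hc, div_mul_eq_mul_div, div_le_iff₀ hcost]
      nlinarith
    linarith
  have hmono : MonotoneOn (fun α : ℝ => c * cos α + sin α) (Icc 0 t) := by
    apply monotoneOn_of_deriv_nonneg (convex_Icc 0 t)
    · exact Continuous.continuousOn (by continuity)
    · intro x hx
      exact (((Real.hasDerivAt_cos x).const_mul c).add (Real.hasDerivAt_sin x)).differentiableAt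
        |>.differentiableWithinAt
    · intro x hx
      rw [interior_Icc] at hx
      have hd : HasDerivAt (fun α : ℝ => c * cos α + sin α) (c * (-sin x) + cos x) x :=
        ((Real.hasDerivAt_cos x).const_mul c).add (Real.hasDerivAt_sin x)
      rw [hd.deriv]
      have := key x ⟨le_of_lt hx.1, le_of_lt hx.2⟩
      linarith
  have heq : c * cos t + sin t = 1 + 2 * sin t := by
    rw [hc]; field_simp; ring
  refine ⟨hmono, heq, ?_⟩
  intro α hα
  have := hmono hα (right_mem_Icc.mpr (le_of_lt ht0)) hα.2
  simpa [heq] using this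
end

section
/- Let θ be a real number with 0 < θ ≤ π/4. The function g(α) = cos α / cos(θ/2) + (cos α · tan(θ/2) + sin α) / (cos(θ/2) − sin(θ/2)) is monotonically increasing on the interval [0, θ/2], and g(θ/2) = 1 + 2 sin(θ/2) / (cos(θ/2) − sin(θ/2)). In particular, for every α ∈ [0, θ/2], g(α) ≤ 1 + 2 sin(θ/2) / (cos(θ/2) − sin(θ/2)). -/
open Real Set

theorem theta4kplus4_bound_maximized
    (θ : ℝ) (hθ0 : 0 < θ) (hθ : θ ≤ π / 4) :
    MonotoneOn (fun α : ℝ =>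
        cos α / cos (θ / 2) +
          (cos α * tan (θ / 2) + sin α) / (cos (θ / 2) - sin (θ / 2)))
        (Icc 0 (θ / 2)) ∧
      cos (θ / 2) / cos (θ / 2) +
          (cos (θ / 2) * tan (θ / 2) + sin (θ / 2)) / (cos (θ / 2) - sin (θ / 2)) =
        1 + 2 * sin (θ / 2) / (cos (θ / 2) - sin (θ / 2)) ∧
      ∀ α ∈ Icc (0 : ℝ) (θ / 2),
        cos α / cos (θ / 2) +
            (cos α * tan (θ / 2) + sin α) / (cos (θ / 2) - sin (θ / 2)) ≤
          1 + 2 * sin (θ / 2) / (cos (θ / 2) - sin (θ / 2)) := by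
  have hπ : 0 < π := Real.pi_pos
  have hc : 0 < cos (θ / 2) := by
    apply Real.cos_pos_of_mem_Ioo
    constructor <;> [linarith; linarith]
  have hsc : sin (θ / 2) < cos (θ / 2) := by
    have h1 : cos (π / 2 - θ / 2) < cos (θ / 2) :=
      Real.cos_lt_cos_of_nonneg_of_le_pi (by linarith) (by linarith) (by linarith)
    rwa [Real.cos_pi_div_two_sub] at h1
  have hB : 0 < cos (θ / 2) - sin (θ / 2) := by linarith
  have key : ∀ α : ℝ,
      cos α / cos (θ / 2) + (cos α * tan (θ / 2) + sin α) / (cos (θ / 2) - sin (θ / 2)) =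
        (cos α + sin α) * ((cos (θ / 2) - sin (θ / 2))⁻¹) := by
    intro α
    rw [Real.tan_eq_sin_div_cos]
    field_simp
    ring
  have hcs : ∀ z : ℝ, cos z + sin z = Real.sqrt 2 * sin (z + π / 4) := by
    intro z
    rw [Real.sin_add, Real.cos_pi_div_four, Real.sin_pi_div_four]
    have h2 : Real.sqrt 2 ^ 2 = 2 := Real.sq_sqrt (by norm_num)
    linear_combination -(sin z + cos z) / 2 * h2
  have hmono : MonotoneOn (fun α : ℝ =>
      cos α / cos (θ / 2) +
        (cos α * tan (θ / 2) + sin α) / (cos (θ / 2) - sin (θ / 2))) (Icc 0 (θ / 2)) := by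
    have hfun : (fun α : ℝ =>
        cos α / cos (θ / 2) +
          (cos α * tan (θ / 2) + sin α) / (cos (θ / 2) - sin (θ / 2))) =
        fun α : ℝ => (cos α + sin α) * ((cos (θ / 2) - sin (θ / 2))⁻¹) := funext key
    rw [hfun]
    intro x hx y hy hxy
    have h1 : sin (x + π / 4) ≤ sin (y + π / 4) := by
      apply Real.strictMonoOn_sin.monotoneOn
      · constructor <;> [linarith [hx.1]; linarith [hx.2]]
      · constructor <;> [linarith [hy.1]; linarith [hy.2]]
      · linarith
    have h2 : cos x + sin x ≤ cos y + sin y := by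
      rw [hcs x, hcs y]
      have : (0:ℝ) ≤ Real.sqrt 2 := Real.sqrt_nonneg 2
      nlinarith
    have hBi : (0:ℝ) ≤ (cos (θ / 2) - sin (θ / 2))⁻¹ := le_of_lt (inv_pos.mpr hB)
    exact mul_le_mul_of_nonneg_right h2 hBi
  have heq : cos (θ / 2) / cos (θ / 2) +
      (cos (θ / 2) * tan (θ / 2) + sin (θ / 2)) / (cos (θ / 2) - sin (θ / 2)) =
      1 + 2 * sin (θ / 2) / (cos (θ / 2) - sin (θ / 2)) := by
    rw [Real.tan_eq_sin_div_cos]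
    field_simp
    ring
  refine ⟨hmono, heq, ?_⟩
  intro α hα
  have hmem : θ / 2 ∈ Icc (0:ℝ) (θ / 2) := ⟨by linarith, le_refl _⟩
  have := hmono hα hmem hα.2
  simp only at this
  calc cos α / cos (θ / 2) + (cos α * tan (θ / 2) + sin α) / (cos (θ / 2) - sin (θ / 2))
      ≤ cos (θ / 2) / cos (θ / 2) +
        (cos (θ / 2) * tan (θ / 2) + sin (θ / 2)) / (cos (θ / 2) - sin (θ / 2)) := this
    _ = 1 + 2 * sin (θ / 2) / (cos (θ / 2) - sin (θ / 2)) := heq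
end

section
/- Let θ be a real number with 0 < θ ≤ π/4. For every β with θ/2 ≤ β ≤ θ, the denominator cos(θ/2 − β) − sin(3θ/2 − β) is positive, the function β ↦ (cos(θ − β) − sin β) / (cos(θ/2 − β) − sin(3θ/2 − β)) is decreasing on [θ/2, θ], and its value at β = θ/2, namely (cos(θ/2) − sin(θ/2)) / (1 − sin θ), equals 1 / (cos(θ/2) − sin(θ/2)). Consequently, for all β ∈ [θ/2, θ], (cos(θ − β) − sin β) / (cos(θ/2 − β) − sin(3θ/2 − β)) ≤ 1 / (cos(θ/2) − sin(θ/2)). -/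
open Real Set

theorem theta4kplus4_case_c
    (θ : ℝ) (hθ0 : 0 < θ) (hθ : θ ≤ π / 4) :
    (∀ β ∈ Icc (θ / 2) θ, 0 < cos (θ / 2 - β) - sin (3 * θ / 2 - β)) ∧
      AntitoneOn (fun β : ℝ =>
          (cos (θ - β) - sin β) / (cos (θ / 2 - β) - sin (3 * θ / 2 - β)))
        (Icc (θ / 2) θ) ∧
      (cos (θ - θ / 2) - sin (θ / 2)) / (cos (θ / 2 - θ / 2) - sin (3 * θ / 2 - θ / 2)) =
        (cos (θ / 2) - sin (θ / 2)) / (1 - sin θ) ∧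
      (cos (θ / 2) - sin (θ / 2)) / (1 - sin θ) = 1 / (cos (θ / 2) - sin (θ / 2)) ∧
      ∀ β ∈ Icc (θ / 2) θ,
        (cos (θ - β) - sin β) / (cos (θ / 2 - β) - sin (3 * θ / 2 - β)) ≤
          1 / (cos (θ / 2) - sin (θ / 2)) := by
  have hpi := Real.pi_pos
  have hN : ∀ β : ℝ, cos (θ - β) - sin β =
      2 * sin (π/4 - θ/2) * sin (π/4 + θ/2 - β) := by
    intro β
    rw [← Real.cos_pi_div_two_sub β, Real.cos_sub_cos]
    rw [show (θ - β - (π/2 - β))/2 = -(π/4 - θ/2) by ring,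
        show (θ - β + (π/2 - β))/2 = π/4 + θ/2 - β by ring, Real.sin_neg]
    ring
  have hD : ∀ β : ℝ, cos (θ/2 - β) - sin (3*θ/2 - β) =
      2 * sin (π/4 - θ/2) * sin (π/4 - θ + β) := by
    intro β
    rw [← Real.cos_pi_div_two_sub (3*θ/2 - β), Real.cos_sub_cos]
    rw [show (θ/2 - β - (π/2 - (3*θ/2 - β)))/2 = -(π/4 - θ + β) by ring,
        show (θ/2 - β + (π/2 - (3*θ/2 - β)))/2 = π/4 - θ/2 by ring, Real.sin_neg]
    ring
  have hs0 : 0 < sin (π/4 - θ/2) :=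
    Real.sin_pos_of_pos_of_lt_pi (by linarith) (by linarith)
  have hargB : ∀ β ∈ Icc (θ/2) θ, π/4 - θ/2 ≤ π/4 - θ + β ∧ π/4 - θ + β ≤ π/4 := by
    rintro β ⟨h1, h2⟩; constructor <;> linarith
  have hargA : ∀ β ∈ Icc (θ/2) θ, π/4 - θ/2 ≤ π/4 + θ/2 - β ∧ π/4 + θ/2 - β ≤ π/4 := by
    rintro β ⟨h1, h2⟩; constructor <;> linarith
  have hsinpos : ∀ x : ℝ, π/4 - θ/2 ≤ x → x ≤ π/4 → 0 < sin x := fun x h1 h2 =>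
    Real.sin_pos_of_pos_of_lt_pi (by linarith) (by linarith)
  have hsinmono : ∀ x y : ℝ, π/4 - θ/2 ≤ x → x ≤ y → y ≤ π/4 → sin x ≤ sin y := by
    intro x y h1 h2 h3
    exact Real.strictMonoOn_sin.monotoneOn ⟨by linarith, by linarith⟩
      ⟨by linarith, by linarith⟩ h2
  have hDpos : ∀ β ∈ Icc (θ/2) θ, 0 < cos (θ/2 - β) - sin (3*θ/2 - β) := by
    intro β hβ
    obtain ⟨h1, h2⟩ := hargB β hβ
    rw [hD β]
    exact mul_pos (by positivity) (hsinpos _ h1 h2)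
  have hanti : AntitoneOn (fun β : ℝ =>
      (cos (θ - β) - sin β) / (cos (θ/2 - β) - sin (3*θ/2 - β))) (Icc (θ/2) θ) := by
    intro β₁ hβ₁ β₂ hβ₂ hle
    simp only
    rw [hN, hD, hN, hD]
    rw [mul_div_mul_left _ _ (by positivity : (2:ℝ) * sin (π/4 - θ/2) ≠ 0),
        mul_div_mul_left _ _ (by positivity : (2:ℝ) * sin (π/4 - θ/2) ≠ 0)]
    obtain ⟨hA₁, hA₁'⟩ := hargA β₁ hβ₁
    obtain ⟨hA₂, hA₂'⟩ := hargA β₂ hβ₂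
    obtain ⟨hB₁, hB₁'⟩ := hargB β₁ hβ₁
    obtain ⟨hB₂, hB₂'⟩ := hargB β₂ hβ₂
    exact div_le_div₀ (le_of_lt (hsinpos _ hA₁ hA₁'))
      (hsinmono _ _ hA₂ (by linarith) hA₁') (hsinpos _ hB₁ hB₁')
      (hsinmono _ _ hB₁ (by linarith) hB₂')
  have heq1 : (cos (θ - θ/2) - sin (θ/2)) / (cos (θ/2 - θ/2) - sin (3*θ/2 - θ/2)) =
      (cos (θ/2) - sin (θ/2)) / (1 - sin θ) := by
    rw [show θ - θ/2 = θ/2 by ring, show θ/2 - θ/2 = (0:ℝ) by ring,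
        show 3*θ/2 - θ/2 = θ by ring, Real.cos_zero]
  have hcs : 0 < cos (θ/2) - sin (θ/2) := by
    have h := Real.cos_lt_cos_of_nonneg_of_le_pi (by linarith : (0:ℝ) ≤ θ/2)
      (by linarith : π/2 - θ/2 ≤ π) (by linarith : θ/2 < π/2 - θ/2)
    rw [Real.cos_pi_div_two_sub] at h
    linarith
  have hsin2 : sin θ = 2 * sin (θ/2) * cos (θ/2) := by
    have := Real.sin_two_mul (θ/2)
    rw [show 2*(θ/2) = θ by ring] at this
    exact this
  have hsq : (cos (θ/2) - sin (θ/2)) * (cos (θ/2) - sin (θ/2)) = 1 - sin θ := by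
    have h := Real.sin_sq_add_cos_sq (θ/2)
    nlinarith [hsin2]
  have heq2 : (cos (θ/2) - sin (θ/2)) / (1 - sin θ) = 1 / (cos (θ/2) - sin (θ/2)) := by
    rw [← hsq]
    field_simp
  refine ⟨hDpos, hanti, heq1, heq2, ?_⟩
  intro β hβ
  have hmem : θ/2 ∈ Icc (θ/2) θ := ⟨le_refl _, by linarith⟩
  have := hanti hmem hβ hβ.1
  simp only at this
  calc (cos (θ - β) - sin β) / (cos (θ/2 - β) - sin (3*θ/2 - β))
      ≤ (cos (θ - θ/2) - sin (θ/2)) / (cos (θ/2 - θ/2) - sin (3*θ/2 - θ/2)) := this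
    _ = 1 / (cos (θ/2) - sin (θ/2)) := by rw [heq1, heq2]
end

section
/- Let θ be a real number with 0 < θ ≤ 2π/7. For every β with θ/4 ≤ β ≤ 3θ/4, the denominator cos(θ/2 − β) − sin(5θ/4 − β) is positive, the function β ↦ (cos(3θ/4 − β) − sin β) / (cos(θ/2 − β) − sin(5θ/4 − β)) is decreasing on [θ/4, 3θ/4], and its value at β = θ/4, namely (cos(θ/2) − sin(θ/4)) / (cos(θ/4) − sin θ), equals cos(θ/4) / (cos(θ/2) − sin(3θ/4)). Consequently, for all β ∈ [θ/4, 3θ/4], (cos(3θ/4 − β) − sin β) / (cos(θ/2 − β) − sin(5θ/4 − β)) ≤ cos(θ/4) / (cos(θ/2) − sin(3θ/4)). -/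
open Real Set

private lemma sin_shift_key (u v x : ℝ) :
    Real.sin (u + x) * Real.sin (v + x) - Real.sin u * Real.sin v =
      Real.sin (u + v + x) * Real.sin x := by
  simp [Real.sin_add, Real.cos_add]
  linear_combination (Real.sin u * Real.sin v) * Real.sin_sq_add_cos_sq x

theorem theta4kplus3_case_c
    (θ : ℝ) (hθ0 : 0 < θ) (hθ : θ ≤ 2 * π / 7) :
    (∀ β ∈ Icc (θ / 4) (3 * θ / 4), 0 < cos (θ / 2 - β) - sin (5 * θ / 4 - β)) ∧
      AntitoneOn (fun β : ℝ =>
          (cos (3 * θ / 4 - β) - sin β) / (cos (θ / 2 - β) - sin (5 * θ / 4 - β)))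
        (Icc (θ / 4) (3 * θ / 4)) ∧
      (cos (3 * θ / 4 - θ / 4) - sin (θ / 4)) /
          (cos (θ / 2 - θ / 4) - sin (5 * θ / 4 - θ / 4)) =
        (cos (θ / 2) - sin (θ / 4)) / (cos (θ / 4) - sin θ) ∧
      (cos (θ / 2) - sin (θ / 4)) / (cos (θ / 4) - sin θ) =
        cos (θ / 4) / (cos (θ / 2) - sin (3 * θ / 4)) ∧
      ∀ β ∈ Icc (θ / 4) (3 * θ / 4),
        (cos (3 * θ / 4 - β) - sin β) / (cos (θ / 2 - β) - sin (5 * θ / 4 - β)) ≤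
          cos (θ / 4) / (cos (θ / 2) - sin (3 * θ / 4)) := by
  have hπ := Real.pi_pos
  -- positivity of the common factor
  have hc : 0 < sin (π / 4 - 3 * θ / 8) :=
    Real.sin_pos_of_pos_of_lt_pi (by linarith) (by linarith)
  -- product form of the denominator
  have hD : ∀ β : ℝ, cos (θ / 2 - β) - sin (5 * θ / 4 - β) =
      2 * sin (π / 4 - 3 * θ / 8) * sin (β - 7 * θ / 8 + π / 4) := by
    intro β
    rw [← Real.cos_pi_div_two_sub (5 * θ / 4 - β), Real.cos_sub_cos,
      show (θ / 2 - β + (π / 2 - (5 * θ / 4 - β))) / 2 = π / 4 - 3 * θ / 8 by ring,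
      show (θ / 2 - β - (π / 2 - (5 * θ / 4 - β))) / 2 = -(β - 7 * θ / 8 + π / 4) by ring,
      Real.sin_neg]
    ring
  -- product form of the numerator
  have hN : ∀ β : ℝ, cos (3 * θ / 4 - β) - sin β =
      2 * sin (π / 4 - 3 * θ / 8) * sin (π / 4 + 3 * θ / 8 - β) := by
    intro β
    rw [← Real.cos_pi_div_two_sub β, Real.cos_sub_cos,
      show (3 * θ / 4 - β + (π / 2 - β)) / 2 = π / 4 + 3 * θ / 8 - β by ring,
      show (3 * θ / 4 - β - (π / 2 - β)) / 2 = -(π / 4 - 3 * θ / 8) by ring,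
      Real.sin_neg]
    ring
  -- positivity of the denominator on the interval
  have hDpos : ∀ β ∈ Icc (θ / 4) (3 * θ / 4),
      0 < cos (θ / 2 - β) - sin (5 * θ / 4 - β) := by
    intro β hβ
    obtain ⟨h1, h2⟩ := hβ
    rw [hD β]
    have hs : 0 < sin (β - 7 * θ / 8 + π / 4) :=
      Real.sin_pos_of_pos_of_lt_pi (by linarith) (by linarith)
    positivity
  -- antitonicity
  have hAnti : AntitoneOn (fun β : ℝ =>
      (cos (3 * θ / 4 - β) - sin β) / (cos (θ / 2 - β) - sin (5 * θ / 4 - β)))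
      (Icc (θ / 4) (3 * θ / 4)) := by
    intro β₁ h₁ β₂ h₂ h₁₂
    simp only
    rw [div_le_div_iff₀ (hDpos β₂ h₂) (hDpos β₁ h₁), hN β₁, hN β₂, hD β₁, hD β₂]
    have hkey := sin_shift_key (π / 4 + 3 * θ / 8 - β₂) (β₁ - 7 * θ / 8 + π / 4) (β₂ - β₁)
    rw [show π / 4 + 3 * θ / 8 - β₂ + (β₂ - β₁) = π / 4 + 3 * θ / 8 - β₁ by ring,
      show β₁ - 7 * θ / 8 + π / 4 + (β₂ - β₁) = β₂ - 7 * θ / 8 + π / 4 by ring,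
      show π / 4 + 3 * θ / 8 - β₂ + (β₁ - 7 * θ / 8 + π / 4) + (β₂ - β₁) = π / 2 - θ / 2
        by ring] at hkey
    obtain ⟨h1a, h1b⟩ := h₁
    obtain ⟨h2a, h2b⟩ := h₂
    have hs1 : 0 ≤ sin (π / 2 - θ / 2) :=
      Real.sin_nonneg_of_nonneg_of_le_pi (by linarith) (by linarith)
    have hs2 : 0 ≤ sin (β₂ - β₁) :=
      Real.sin_nonneg_of_nonneg_of_le_pi (by linarith) (by linarith)
    nlinarith [mul_pos hc hc, mul_nonneg hs1 hs2, hkey]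
  -- first equality
  have hEq1 : (cos (3 * θ / 4 - θ / 4) - sin (θ / 4)) /
      (cos (θ / 2 - θ / 4) - sin (5 * θ / 4 - θ / 4)) =
      (cos (θ / 2) - sin (θ / 4)) / (cos (θ / 4) - sin θ) := by
    rw [show 3 * θ / 4 - θ / 4 = θ / 2 by ring, show θ / 2 - θ / 4 = θ / 4 by ring,
      show 5 * θ / 4 - θ / 4 = θ by ring]
  -- second equality
  have hs' : 0 < sin (π / 4 - θ / 8) :=
    Real.sin_pos_of_pos_of_lt_pi (by linarith) (by linarith)
  have hs5 : 0 < sin (π / 4 - 5 * θ / 8) :=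
    Real.sin_pos_of_pos_of_lt_pi (by linarith) (by linarith)
  have hE1 : cos (θ / 2) - sin (θ / 4) =
      2 * sin (π / 4 - 3 * θ / 8) * cos (π / 4 - θ / 8) := by
    have := hN (θ / 4)
    rw [show 3 * θ / 4 - θ / 4 = θ / 2 by ring,
      show π / 4 + 3 * θ / 8 - θ / 4 = π / 4 + θ / 8 by ring] at this
    rw [this, show π / 4 - θ / 8 = π / 2 - (π / 4 + θ / 8) by ring,
      Real.cos_pi_div_two_sub]
  have hE2 : cos (θ / 4) - sin θ =
      2 * sin (π / 4 - 3 * θ / 8) * sin (π / 4 - 5 * θ / 8) := by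
    have := hD (θ / 4)
    rw [show θ / 2 - θ / 4 = θ / 4 by ring, show 5 * θ / 4 - θ / 4 = θ by ring,
      show θ / 4 - 7 * θ / 8 + π / 4 = π / 4 - 5 * θ / 8 by ring] at this
    exact this
  have hE3 : cos (θ / 2) - sin (3 * θ / 4) =
      2 * sin (π / 4 - θ / 8) * sin (π / 4 - 5 * θ / 8) := by
    rw [← Real.cos_pi_div_two_sub (3 * θ / 4), Real.cos_sub_cos,
      show (θ / 2 + (π / 2 - 3 * θ / 4)) / 2 = π / 4 - θ / 8 by ring,
      show (θ / 2 - (π / 2 - 3 * θ / 4)) / 2 = -(π / 4 - 5 * θ / 8) by ring,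
      Real.sin_neg]
    ring
  have hE4 : cos (θ / 4) = 2 * sin (π / 4 - θ / 8) * cos (π / 4 - θ / 8) := by
    rw [← Real.sin_two_mul, show 2 * (π / 4 - θ / 8) = π / 2 - θ / 4 by ring,
      Real.sin_pi_div_two_sub]
  have hEq2 : (cos (θ / 2) - sin (θ / 4)) / (cos (θ / 4) - sin θ) =
      cos (θ / 4) / (cos (θ / 2) - sin (3 * θ / 4)) := by
    rw [hE1, hE2, hE3, hE4, div_eq_div_iff (by positivity) (by positivity)]
    ring
  refine ⟨hDpos, hAnti, hEq1, hEq2, ?_⟩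
  intro β hβ
  have hmem : θ / 4 ∈ Icc (θ / 4) (3 * θ / 4) := ⟨le_refl _, by linarith⟩
  have := hAnti hmem hβ hβ.1
  simp only at this
  calc (cos (3 * θ / 4 - β) - sin β) / (cos (θ / 2 - β) - sin (5 * θ / 4 - β))
      ≤ (cos (3 * θ / 4 - θ / 4) - sin (θ / 4)) /
          (cos (θ / 2 - θ / 4) - sin (5 * θ / 4 - θ / 4)) := this
    _ = cos (θ / 4) / (cos (θ / 2) - sin (3 * θ / 4)) := by rw [hEq1, hEq2]
end

section
/- Let θ and β be real numbers with 0 < θ ≤ 2π/7 and 0 ≤ β ≤ θ/2. Then the denominator cos(θ/2 − β) − sin(3θ/4 + β) is positive and (cos(θ/4 + β) − sin β) / (cos(θ/2 − β) − sin(3θ/4 + β)) = cos(θ/4) / (cos(θ/2) − sin(3θ/4)). -/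
open Real

theorem theta4kplus3_case_d
    (θ β : ℝ) (hθ0 : 0 < θ) (hθ : θ ≤ 2 * π / 7) (hβ0 : 0 ≤ β) (hβ : β ≤ θ / 2) :
    0 < cos (θ / 2 - β) - sin (3 * θ / 4 + β) ∧
      (cos (θ / 4 + β) - sin β) / (cos (θ / 2 - β) - sin (3 * θ / 4 + β)) =
        cos (θ / 4) / (cos (θ / 2) - sin (3 * θ / 4)) := by
  have prod : ∀ A B : ℝ, 2 * sin A * sin B = cos (A - B) - cos (A + B) := by
    intro A B; rw [cos_sub, cos_add]; ring
  have hden : ∀ b : ℝ, cos (θ / 2 - b) - sin (3 * θ / 4 + b) =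
      2 * sin (π / 4 - θ / 8 - b) * sin (π / 4 - 5 * θ / 8) := by
    intro b
    have h := prod (π / 4 - θ / 8 - b) (π / 4 - 5 * θ / 8)
    rw [show (π / 4 - θ / 8 - b) - (π / 4 - 5 * θ / 8) = θ / 2 - b by ring,
        show (π / 4 - θ / 8 - b) + (π / 4 - 5 * θ / 8) = π / 2 - (3 * θ / 4 + b) by ring,
        cos_pi_div_two_sub] at h
    exact h.symm
  have hnum : ∀ b : ℝ, cos (θ / 4 + b) - sin b =
      2 * sin (θ / 8 + π / 4) * sin (π / 4 - θ / 8 - b) := by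
    intro b
    have h := prod (θ / 8 + π / 4) (π / 4 - θ / 8 - b)
    rw [show (θ / 8 + π / 4) - (π / 4 - θ / 8 - b) = θ / 4 + b by ring,
        show (θ / 8 + π / 4) + (π / 4 - θ / 8 - b) = π / 2 - b by ring,
        cos_pi_div_two_sub] at h
    exact h.symm
  have hπ := pi_pos
  have hT : 0 < sin (π / 4 - θ / 8 - β) :=
    sin_pos_of_pos_of_lt_pi (by linarith) (by linarith)
  have hT0 : 0 < sin (π / 4 - θ / 8) :=
    sin_pos_of_pos_of_lt_pi (by linarith) (by linarith)
  have hS2 : 0 < sin (π / 4 - 5 * θ / 8) :=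
    sin_pos_of_pos_of_lt_pi (by linarith) (by linarith)
  have hden0 : cos (θ / 2) - sin (3 * θ / 4) =
      2 * sin (π / 4 - θ / 8) * sin (π / 4 - 5 * θ / 8) := by simpa using hden 0
  have hnum0 : cos (θ / 4) = 2 * sin (θ / 8 + π / 4) * sin (π / 4 - θ / 8) := by
    simpa using hnum 0
  constructor
  · rw [hden β]; positivity
  · rw [hden β, hnum β, hden0, hnum0]
    rw [div_eq_div_iff (by positivity) (by positivity)]
    ring
end

section
/- Let θ be a real number with 0 < θ ≤ 2π/9. For every β with 3θ/4 ≤ β ≤ 5θ/4, the denominator cos(θ/2 − β) − sin(7θ/4 − β) is positive, the function β ↦ (cos(5θ/4 − β) − sin β) / (cos(θ/2 − β) − sin(7θ/4 − β)) is decreasing on [3θ/4, 5θ/4], its value at β = 3θ/4 equals (cos(θ/2) − sin(3θ/4)) / (cos(θ/4) − sin θ), and this value is strictly less than cos(θ/4) / (cos(θ/2) − sin(3θ/4)). Consequently, for all β ∈ [3θ/4, 5θ/4], (cos(5θ/4 − β) − sin β) / (cos(θ/2 − β) − sin(7θ/4 − β)) ≤ cos(θ/4) / (cos(θ/2) − sin(3θ/4)).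 -/
open Real Set

set_option maxHeartbeats 1000000

theorem theta4kplus5_case_c
    (θ : ℝ) (hθ0 : 0 < θ) (hθ : θ ≤ 2 * π / 9) :
    (∀ β ∈ Icc (3 * θ / 4) (5 * θ / 4), 0 < cos (θ / 2 - β) - sin (7 * θ / 4 - β)) ∧
      AntitoneOn (fun β : ℝ =>
          (cos (5 * θ / 4 - β) - sin β) / (cos (θ / 2 - β) - sin (7 * θ / 4 - β)))
        (Icc (3 * θ / 4) (5 * θ / 4)) ∧
      (cos (5 * θ / 4 - 3 * θ / 4) - sin (3 * θ / 4)) /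
          (cos (θ / 2 - 3 * θ / 4) - sin (7 * θ / 4 - 3 * θ / 4)) =
        (cos (θ / 2) - sin (3 * θ / 4)) / (cos (θ / 4) - sin θ) ∧
      (cos (θ / 2) - sin (3 * θ / 4)) / (cos (θ / 4) - sin θ) <
        cos (θ / 4) / (cos (θ / 2) - sin (3 * θ / 4)) ∧
      ∀ β ∈ Icc (3 * θ / 4) (5 * θ / 4),
        (cos (5 * θ / 4 - β) - sin β) / (cos (θ / 2 - β) - sin (7 * θ / 4 - β)) ≤
          cos (θ / 4) / (cos (θ / 2) - sin (3 * θ / 4)) := by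
  have hπ : (3:ℝ) < π := Real.pi_gt_three
  -- product form for the numerator
  have keyN : ∀ β : ℝ, cos (5 * θ / 4 - β) - sin β
      = 2 * sin (π/4 - 5*θ/8) * sin (π/4 + 5*θ/8 - β) := by
    intro β
    rw [← Real.cos_pi_div_two_sub β, Real.cos_sub_cos,
      show (5 * θ / 4 - β + (π/2 - β))/2 = π/4 + 5*θ/8 - β by ring,
      show (5 * θ / 4 - β - (π/2 - β))/2 = -(π/4 - 5*θ/8) by ring,
      Real.sin_neg]
    ring
  -- product form for the denominator
  have keyD : ∀ β : ℝ, cos (θ / 2 - β) - sin (7 * θ / 4 - β)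
      = 2 * sin (π/4 - 5*θ/8) * sin (π/4 + β - 9*θ/8) := by
    intro β
    rw [← Real.cos_pi_div_two_sub (7 * θ / 4 - β), Real.cos_sub_cos,
      show (θ / 2 - β + (π/2 - (7 * θ / 4 - β)))/2 = π/4 - 5*θ/8 by ring,
      show (θ / 2 - β - (π/2 - (7 * θ / 4 - β)))/2 = -(π/4 + β - 9*θ/8) by ring,
      Real.sin_neg]
    ring
  have hs : 0 < sin (π/4 - 5*θ/8) := by
    apply Real.sin_pos_of_pos_of_lt_pi <;> linarith
  have h2s : (0:ℝ) < 2 * sin (π/4 - 5*θ/8) := by linarith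
  have ha : ∀ β ∈ Icc (3 * θ / 4) (5 * θ / 4), 0 < sin (π/4 + 5*θ/8 - β) := by
    rintro β ⟨h1, h2⟩
    apply Real.sin_pos_of_pos_of_lt_pi <;> linarith
  have hb : ∀ β ∈ Icc (3 * θ / 4) (5 * θ / 4), 0 < sin (π/4 + β - 9*θ/8) := by
    rintro β ⟨h1, h2⟩
    apply Real.sin_pos_of_pos_of_lt_pi <;> linarith
  -- Part 1 : positivity of the denominator
  have part1 : ∀ β ∈ Icc (3 * θ / 4) (5 * θ / 4),
      0 < cos (θ / 2 - β) - sin (7 * θ / 4 - β) := by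
    intro β hβ
    rw [keyD]
    exact mul_pos h2s (hb β hβ)
  -- Part 2 : antitonicity
  have part2 : AntitoneOn (fun β : ℝ =>
      (cos (5 * θ / 4 - β) - sin β) / (cos (θ / 2 - β) - sin (7 * θ / 4 - β)))
      (Icc (3 * θ / 4) (5 * θ / 4)) := by
    rintro β₁ hβ₁ β₂ hβ₂ h12
    simp only
    have hN21 : cos (5 * θ / 4 - β₂) - sin β₂ ≤ cos (5 * θ / 4 - β₁) - sin β₁ := by
      rw [keyN β₁, keyN β₂]
      apply mul_le_mul_of_nonneg_left _ (le_of_lt h2s)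
      apply Real.sin_le_sin_of_le_of_le_pi_div_two
      · obtain ⟨_, h2⟩ := hβ₂; linarith
      · obtain ⟨h1, _⟩ := hβ₁; linarith
      · linarith
    have hD12 : cos (θ / 2 - β₁) - sin (7 * θ / 4 - β₁)
        ≤ cos (θ / 2 - β₂) - sin (7 * θ / 4 - β₂) := by
      rw [keyD β₁, keyD β₂]
      apply mul_le_mul_of_nonneg_left _ (le_of_lt h2s)
      apply Real.sin_le_sin_of_le_of_le_pi_div_two
      · obtain ⟨h1, _⟩ := hβ₁; linarith
      · obtain ⟨_, h2⟩ := hβ₂; linarith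
      · linarith
    have hNpos : 0 ≤ cos (5 * θ / 4 - β₁) - sin β₁ := by
      rw [keyN β₁]; exact le_of_lt (mul_pos h2s (ha β₁ hβ₁))
    exact div_le_div₀ hNpos hN21 (part1 β₁ hβ₁) hD12
  -- Part 3 : the value at β = 3θ/4
  have part3 : (cos (5 * θ / 4 - 3 * θ / 4) - sin (3 * θ / 4)) /
      (cos (θ / 2 - 3 * θ / 4) - sin (7 * θ / 4 - 3 * θ / 4)) =
      (cos (θ / 2) - sin (3 * θ / 4)) / (cos (θ / 4) - sin θ) := by
    rw [show 5 * θ / 4 - 3 * θ / 4 = θ / 2 by ring,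
      show θ / 2 - 3 * θ / 4 = -(θ / 4) by ring,
      show 7 * θ / 4 - 3 * θ / 4 = θ by ring, Real.cos_neg]
  -- factored forms at β = 3θ/4
  have hNfac : cos (θ / 2) - sin (3 * θ / 4)
      = 2 * sin (π/4 - 5*θ/8) * sin (π/4 - θ/8) := by
    have := keyN (3 * θ / 4)
    rwa [show 5 * θ / 4 - 3 * θ / 4 = θ / 2 by ring,
      show π/4 + 5*θ/8 - 3 * θ / 4 = π/4 - θ/8 by ring] at this
  have hDfac : cos (θ / 4) - sin θ
      = 2 * sin (π/4 - 5*θ/8) * sin (π/4 - 3*θ/8) := by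
    have := keyD (3 * θ / 4)
    rwa [show θ / 2 - 3 * θ / 4 = -(θ / 4) by ring,
      show 7 * θ / 4 - 3 * θ / 4 = θ by ring,
      show π/4 + 3 * θ / 4 - 9*θ/8 = π/4 - 3*θ/8 by ring, Real.cos_neg] at this
  have hp : 0 < sin (π/4 - θ/8) := by
    apply Real.sin_pos_of_pos_of_lt_pi <;> linarith
  have hq : 0 < sin (π/4 - 3*θ/8) := by
    apply Real.sin_pos_of_pos_of_lt_pi <;> linarith
  have hN0 : 0 < cos (θ / 2) - sin (3 * θ / 4) := by
    rw [hNfac]; exact mul_pos h2s hp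
  have hD0 : 0 < cos (θ / 4) - sin θ := by
    rw [hDfac]; exact mul_pos h2s hq
  -- Part 4 : the strict inequality
  have hcs : cos (π/4 + θ/8) = sin (π/4 - θ/8) := by
    rw [← Real.cos_pi_div_two_sub, show π/2 - (π/4 - θ/8) = π/4 + θ/8 by ring]
  have step2 : cos (θ/2) * sin (π/4 - θ/8)
      = (sin (π/4 + 3*θ/8) + sin (π/4 - 5*θ/8)) / 2 := by
    have := Real.two_mul_sin_mul_cos (π/4 - θ/8) (θ/2)
    rw [show π/4 - θ/8 - θ/2 = π/4 - 5*θ/8 by ring,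
      show π/4 - θ/8 + θ/2 = π/4 + 3*θ/8 by ring] at this
    linarith
  have step3 : sin (3*θ/4) * sin (π/4 - θ/8)
      = (sin (π/4 + 7*θ/8) - sin (π/4 - 5*θ/8)) / 2 := by
    have := Real.sin_sub_sin (π/4 + 7*θ/8) (π/4 - 5*θ/8)
    rw [show (π/4 + 7*θ/8 - (π/4 - 5*θ/8))/2 = 3*θ/4 by ring,
      show (π/4 + 7*θ/8 + (π/4 - 5*θ/8))/2 = π/4 + θ/8 by ring, hcs] at this
    linarith
  have step4 : cos (θ/4) * sin (π/4 - 3*θ/8)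
      = (sin (π/4 - θ/8) + sin (π/4 - 5*θ/8)) / 2 := by
    have := Real.two_mul_sin_mul_cos (π/4 - 3*θ/8) (θ/4)
    rw [show π/4 - 3*θ/8 - θ/4 = π/4 - 5*θ/8 by ring,
      show π/4 - 3*θ/8 + θ/4 = π/4 - θ/8 by ring] at this
    linarith
  have step5 : sin (π/4 + 3*θ/8) - sin (π/4 - θ/8)
      = 2 * sin (θ/4) * cos (π/4 + θ/8) := by
    have := Real.sin_sub_sin (π/4 + 3*θ/8) (π/4 - θ/8)
    rwa [show (π/4 + 3*θ/8 - (π/4 - θ/8))/2 = θ/4 by ring,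
      show (π/4 + 3*θ/8 + (π/4 - θ/8))/2 = π/4 + θ/8 by ring] at this
  have step6 : sin (π/4 + 7*θ/8) - sin (π/4 - 5*θ/8)
      = 2 * sin (3*θ/4) * cos (π/4 + θ/8) := by
    have := Real.sin_sub_sin (π/4 + 7*θ/8) (π/4 - 5*θ/8)
    rwa [show (π/4 + 7*θ/8 - (π/4 - 5*θ/8))/2 = 3*θ/4 by ring,
      show (π/4 + 7*θ/8 + (π/4 - 5*θ/8))/2 = π/4 + θ/8 by ring] at this
  have hc : 0 < cos (π/4 + θ/8) :=
    Real.cos_pos_of_mem_Ioo ⟨by linarith, by linarith⟩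
  have hlt : sin (θ/4) < sin (3*θ/4) :=
    Real.strictMonoOn_sin ⟨by linarith, by linarith⟩ ⟨by linarith, by linarith⟩ (by linarith)
  have hstrict : 2 * sin (θ/4) * cos (π/4 + θ/8) < 2 * sin (3*θ/4) * cos (π/4 + θ/8) := by
    have := mul_lt_mul_of_pos_right hlt hc
    nlinarith
  have key : (cos (θ / 2) - sin (3 * θ / 4)) * sin (π/4 - θ/8)
      < cos (θ/4) * sin (π/4 - 3*θ/8) := by
    nlinarith [step2, step3, step4, step5, step6, hstrict]
  have part4 : (cos (θ / 2) - sin (3 * θ / 4)) / (cos (θ / 4) - sin θ) <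
      cos (θ / 4) / (cos (θ / 2) - sin (3 * θ / 4)) := by
    rw [div_lt_div_iff₀ hD0 hN0]
    rw [hNfac] at key ⊢
    rw [hDfac]
    have key2 := mul_lt_mul_of_pos_left key h2s
    linarith [key2]
  refine ⟨part1, part2, part3, part4, ?_⟩
  -- Part 5 : the consequence
  intro β hβ
  have hmem : 3 * θ / 4 ∈ Icc (3 * θ / 4) (5 * θ / 4) := ⟨le_refl _, by linarith⟩
  have h1 := part2 hmem hβ hβ.1
  simp only at h1
  calc (cos (5 * θ / 4 - β) - sin β) / (cos (θ / 2 - β) - sin (7 * θ / 4 - β))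
      ≤ (cos (5 * θ / 4 - 3 * θ / 4) - sin (3 * θ / 4)) /
          (cos (θ / 2 - 3 * θ / 4) - sin (7 * θ / 4 - 3 * θ / 4)) := h1
    _ = (cos (θ / 2) - sin (3 * θ / 4)) / (cos (θ / 4) - sin θ) := part3
    _ ≤ cos (θ / 4) / (cos (θ / 2) - sin (3 * θ / 4)) := le_of_lt part4
end

section
/- Let θ and β be real numbers with 0 < θ ≤ 2π/9 and θ/4 ≤ β ≤ θ/2. Then the denominator cos(θ/2 − β) − sin(θ/4 + β) is positive and (cos(β − θ/4) − sin β) / (cos(θ/2 − β) − sin(θ/4 + β)) ≤ cos(θ/4) / (cos(θ/2) − sin(3θ/4)). -/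
open Real

lemma cos_sub_sin_factor (a b : ℝ) :
    cos a - sin b = 2 * sin (π / 4 + (a - b) / 2) * sin (π / 4 - (a + b) / 2) := by
  rw [← cos_pi_div_two_sub b, cos_sub_cos]
  rw [show (a - (π / 2 - b)) / 2 = -(π / 4 - (a + b) / 2) by ring, sin_neg]
  rw [show (a + (π / 2 - b)) / 2 = π / 4 + (a - b) / 2 by ring]
  ring

set_option maxHeartbeats 1000000 in
theorem theta4kplus5_case_d_first
    (θ β : ℝ) (hθ0 : 0 < θ) (hθ : θ ≤ 2 * π / 9) (hβ0 : θ / 4 ≤ β) (hβ : β ≤ θ / 2) :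
    0 < cos (θ / 2 - β) - sin (θ / 4 + β) ∧
      (cos (β - θ / 4) - sin β) / (cos (θ / 2 - β) - sin (θ / 4 + β)) ≤
        cos (θ / 4) / (cos (θ / 2) - sin (3 * θ / 4)) := by
  have hπ : 0 < π := pi_pos
  -- factorization identities
  have hden1 : cos (θ / 2 - β) - sin (θ / 4 + β)
      = 2 * sin (π / 4 + (θ / 8 - β)) * sin (π / 4 - 3 * θ / 8) := by
    have := cos_sub_sin_factor (θ / 2 - β) (θ / 4 + β)
    rw [show (θ / 2 - β - (θ / 4 + β)) / 2 = θ / 8 - β by ring,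
        show (θ / 2 - β + (θ / 4 + β)) / 2 = 3 * θ / 8 by ring] at this
    linarith [this]
  have hden2 : cos (θ / 2) - sin (3 * θ / 4)
      = 2 * sin (π / 4 - θ / 8) * sin (π / 4 - 5 * θ / 8) := by
    have := cos_sub_sin_factor (θ / 2) (3 * θ / 4)
    rw [show (θ / 2 - 3 * θ / 4) / 2 = -(θ / 8) by ring,
        show (θ / 2 + 3 * θ / 4) / 2 = 5 * θ / 8 by ring,
        show π / 4 + -(θ / 8) = π / 4 - θ / 8 by ring] at this
    linarith [this]
  have hnum : cos (β - θ / 4) - sin β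
      = 2 * sin (π / 4 - θ / 8) * sin (π / 4 + (θ / 8 - β)) := by
    have := cos_sub_sin_factor (β - θ / 4) β
    rw [show (β - θ / 4 - β) / 2 = -(θ / 8) by ring,
        show (β - θ / 4 + β) / 2 = β - θ / 8 by ring,
        show π / 4 + -(θ / 8) = π / 4 - θ / 8 by ring,
        show π / 4 - (β - θ / 8) = π / 4 + (θ / 8 - β) by ring] at this
    linarith [this]
  -- positivity of the sine factors
  have hS : 0 < sin (π / 4 + (θ / 8 - β)) := by
    apply sin_pos_of_pos_of_lt_pi <;> [linarith; linarith]
  have hs3 : 0 < sin (π / 4 - 3 * θ / 8) := by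
    apply sin_pos_of_pos_of_lt_pi <;> [linarith; linarith]
  have hs1 : 0 < sin (π / 4 - θ / 8) := by
    apply sin_pos_of_pos_of_lt_pi <;> [linarith; linarith]
  have hs5 : 0 < sin (π / 4 - 5 * θ / 8) := by
    apply sin_pos_of_pos_of_lt_pi <;> [linarith; linarith]
  have hD1 : 0 < cos (θ / 2 - β) - sin (θ / 4 + β) := by
    rw [hden1]; positivity
  have hD2 : 0 < cos (θ / 2) - sin (3 * θ / 4) := by
    rw [hden2]; positivity
  refine ⟨hD1, ?_⟩
  rw [div_le_div_iff₀ hD1 hD2]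
  rw [hnum, hden1, hden2]
  -- auxiliary trig facts
  have hsθ : 0 ≤ sin (θ / 4) := by
    apply sin_nonneg_of_nonneg_of_le_pi <;> linarith
  have hsθ1 : sin (θ / 4) ≤ 1 := sin_le_one _
  have hcθ : 0 ≤ cos (θ / 4) := by
    apply cos_nonneg_of_mem_Icc
    constructor <;> [linarith; linarith]
  have hc3 : 0 ≤ cos (π / 4 - 3 * θ / 8) := by
    apply cos_nonneg_of_mem_Icc
    constructor <;> [linarith; linarith]
  -- 2 sin²(π/4 - θ/8) = 1 - sin(θ/4)
  have hsq : 2 * sin (π / 4 - θ / 8) ^ 2 = 1 - sin (θ / 4) := by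
    have h := cos_two_mul (π / 4 - θ / 8)
    rw [show 2 * (π / 4 - θ / 8) = π / 2 - θ / 4 by ring, cos_pi_div_two_sub] at h
    have h2 := sin_sq_add_cos_sq (π / 4 - θ / 8)
    nlinarith [h, h2]
  -- sin(π/4 - 5θ/8) = sin(π/4 - 3θ/8) cos(θ/4) - cos(π/4 - 3θ/8) sin(θ/4)
  have hsub : sin (π / 4 - 5 * θ / 8)
      = sin (π / 4 - 3 * θ / 8) * cos (θ / 4) - cos (π / 4 - 3 * θ / 8) * sin (θ / 4) := by
    have := sin_sub (π / 4 - 3 * θ / 8) (θ / 4)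
    rw [show π / 4 - 3 * θ / 8 - θ / 4 = π / 4 - 5 * θ / 8 by ring] at this
    linarith [this]
  have hbr : 2 * sin (π / 4 - θ / 8) ^ 2 * sin (π / 4 - 5 * θ / 8)
      ≤ cos (θ / 4) * sin (π / 4 - 3 * θ / 8) := by
    have h1 : sin (π / 4 - θ / 8) ^ 2 = (1 - sin (θ / 4)) / 2 := by linarith
    rw [h1, hsub]
    have hhint : 0 ≤ sin (θ / 4) * (cos (θ / 4) * sin (π / 4 - 3 * θ / 8)
        + (1 - sin (θ / 4)) * cos (π / 4 - 3 * θ / 8)) :=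
      mul_nonneg hsθ (add_nonneg (mul_nonneg hcθ hs3.le)
        (mul_nonneg (by linarith : (0:ℝ) ≤ 1 - sin (θ / 4)) hc3))
    set s := sin (θ / 4)
    set c := cos (θ / 4)
    set s3 := sin (π / 4 - 3 * θ / 8)
    set c3 := cos (π / 4 - 3 * θ / 8)
    nlinarith [hhint]
  have h2S : (0:ℝ) ≤ 2 * sin (π / 4 + (θ / 8 - β)) := by linarith
  calc 2 * sin (π / 4 - θ / 8) * sin (π / 4 + (θ / 8 - β)) *
        (2 * sin (π / 4 - θ / 8) * sin (π / 4 - 5 * θ / 8))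
      = 2 * sin (π / 4 + (θ / 8 - β)) *
        (2 * sin (π / 4 - θ / 8) ^ 2 * sin (π / 4 - 5 * θ / 8)) := by ring
    _ ≤ 2 * sin (π / 4 + (θ / 8 - β)) * (cos (θ / 4) * sin (π / 4 - 3 * θ / 8)) :=
        mul_le_mul_of_nonneg_left hbr h2S
    _ = cos (θ / 4) * (2 * sin (π / 4 + (θ / 8 - β)) * sin (π / 4 - 3 * θ / 8)) := by ring
end

section
/- Let θ be a real number with 0 < θ ≤ 2π/9. For every β with 0 ≤ β ≤ θ/4, the denominator cos(θ/2 − β) − sin(3θ/4 − β) is positive, the function β ↦ (cos(θ/4 − β) − sin β) / (cos(θ/2 − β) − sin(3θ/4 − β)) is decreasing on [0, θ/4], and its value at β = 0 equals cos(θ/4) / (cos(θ/2) − sin(3θ/4)). Consequently, for all β ∈ [0, θ/4], (cos(θ/4 − β) − sin β) / (cos(θ/2 − β) − sin(3θ/4 − β)) ≤ cos(θ/4) / (cos(θ/2) − sin(3θ/4)). -/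
open Real Set

theorem theta4kplus5_case_d_second
    (θ : ℝ) (hθ0 : 0 < θ) (hθ : θ ≤ 2 * π / 9) :
    (∀ β ∈ Icc (0 : ℝ) (θ / 4), 0 < cos (θ / 2 - β) - sin (3 * θ / 4 - β)) ∧
      AntitoneOn (fun β : ℝ =>
          (cos (θ / 4 - β) - sin β) / (cos (θ / 2 - β) - sin (3 * θ / 4 - β)))
        (Icc (0 : ℝ) (θ / 4)) ∧
      (cos (θ / 4 - 0) - sin 0) / (cos (θ / 2 - 0) - sin (3 * θ / 4 - 0)) =
        cos (θ / 4) / (cos (θ / 2) - sin (3 * θ / 4)) ∧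
      ∀ β ∈ Icc (0 : ℝ) (θ / 4),
        (cos (θ / 4 - β) - sin β) / (cos (θ / 2 - β) - sin (3 * θ / 4 - β)) ≤
          cos (θ / 4) / (cos (θ / 2) - sin (3 * θ / 4)) := by
  have hπ := Real.pi_pos
  have prod : ∀ A B : ℝ, cos (A - B) - cos (A + B) = 2 * sin A * sin B := by
    intro A B; rw [cos_sub, cos_add]; ring
  have hN : ∀ β : ℝ, cos (θ / 4 - β) - sin β
      = 2 * sin (π / 4 - θ / 8) * sin (π / 4 + θ / 8 - β) := by
    intro β
    have h := prod (π / 4 - θ / 8) (π / 4 + θ / 8 - β)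
    rw [show (π / 4 - θ / 8) - (π / 4 + θ / 8 - β) = -(θ / 4 - β) by ring,
      cos_neg, show (π / 4 - θ / 8) + (π / 4 + θ / 8 - β) = π / 2 - β by ring,
      cos_pi_div_two_sub] at h
    exact h
  have hD : ∀ β : ℝ, cos (θ / 2 - β) - sin (3 * θ / 4 - β)
      = 2 * sin (π / 4 - θ / 8) * sin (π / 4 - 5 * θ / 8 + β) := by
    intro β
    have h := prod (π / 4 - θ / 8) (π / 4 - 5 * θ / 8 + β)
    rw [show (π / 4 - θ / 8) - (π / 4 - 5 * θ / 8 + β) = θ / 2 - β by ring,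
      show (π / 4 - θ / 8) + (π / 4 - 5 * θ / 8 + β) = π / 2 - (3 * θ / 4 - β) by ring,
      cos_pi_div_two_sub] at h
    exact h
  have hc : 0 < sin (π / 4 - θ / 8) :=
    sin_pos_of_pos_of_lt_pi (by linarith) (by linarith)
  -- membership of the numerator/denominator arguments in [-π/2, π/2]
  have hNarg : ∀ β ∈ Icc (0 : ℝ) (θ / 4),
      π / 4 + θ / 8 - β ∈ Icc (-(π / 2)) (π / 2) := by
    intro β hβ; exact ⟨by linarith [hβ.1, hβ.2], by linarith [hβ.1, hβ.2]⟩
  have hDarg : ∀ β ∈ Icc (0 : ℝ) (θ / 4),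
      π / 4 - 5 * θ / 8 + β ∈ Icc (-(π / 2)) (π / 2) := by
    intro β hβ; exact ⟨by linarith [hβ.1, hβ.2], by linarith [hβ.1, hβ.2]⟩
  have hDpos : ∀ β ∈ Icc (0 : ℝ) (θ / 4),
      0 < cos (θ / 2 - β) - sin (3 * θ / 4 - β) := by
    intro β hβ
    rw [hD β]
    have : 0 < sin (π / 4 - 5 * θ / 8 + β) :=
      sin_pos_of_pos_of_lt_pi (by linarith [hβ.1]) (by linarith [hβ.2])
    positivity
  have hNpos : ∀ β ∈ Icc (0 : ℝ) (θ / 4),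
      0 ≤ cos (θ / 4 - β) - sin β := by
    intro β hβ
    rw [hN β]
    have : 0 < sin (π / 4 + θ / 8 - β) :=
      sin_pos_of_pos_of_lt_pi (by linarith [hβ.2]) (by linarith [hβ.1])
    positivity
  have hanti : AntitoneOn (fun β : ℝ =>
      (cos (θ / 4 - β) - sin β) / (cos (θ / 2 - β) - sin (3 * θ / 4 - β)))
      (Icc (0 : ℝ) (θ / 4)) := by
    intro x hx y hy hxy
    simp only
    have hNy : cos (θ / 4 - y) - sin y ≤ cos (θ / 4 - x) - sin x := by
      rw [hN x, hN y]
      have := Real.strictMonoOn_sin.monotoneOn (hNarg y hy) (hNarg x hx)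
        (by linarith)
      nlinarith [hc]
    have hDx : cos (θ / 2 - x) - sin (3 * θ / 4 - x)
        ≤ cos (θ / 2 - y) - sin (3 * θ / 4 - y) := by
      rw [hD x, hD y]
      have := Real.strictMonoOn_sin.monotoneOn (hDarg x hx) (hDarg y hy)
        (by linarith)
      nlinarith [hc]
    exact div_le_div₀ (hNpos x hx) hNy (hDpos x hx) hDx
  have hval : (cos (θ / 4 - 0) - sin 0) / (cos (θ / 2 - 0) - sin (3 * θ / 4 - 0)) =
      cos (θ / 4) / (cos (θ / 2) - sin (3 * θ / 4)) := by
    norm_num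
  refine ⟨hDpos, hanti, hval, ?_⟩
  intro β hβ
  have h0 : (0 : ℝ) ∈ Icc (0 : ℝ) (θ / 4) := ⟨le_refl _, by linarith⟩
  have := hanti h0 hβ hβ.1
  simpa [hval] using this
end

section
/- Let θ be a real number with 0 < θ < π/2. Set P = cos(θ/4)/cos(θ/2), Q = sin(3θ/4)/cos(θ/2), and R = (sin(θ/4)/cos(θ/2)) · Q. Then P + P·Q + (sin(3θ/4)/sin θ)·R + (sin(θ/4)/sin θ)·R = (3·cos(θ/4) + cos(3θ/4) + sin(θ/2) + sin θ + sin(3θ/2)) / (3·cos(θ/2) + cos(3θ/2)). -/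
/-! Put `x = θ / 4`. Since `sin 3x + sin x = 2 sin 2x cos x` and `sin 4x = 2 sin 2x cos 2x`, the last
two edges together have length `P · R`, so the path has length `P (1 + Q + R)`. Over the common
denominator `4 cos³ 2x = 3 cos 2x + cos 6x` the claim becomes a polynomial identity in `sin x`
and `cos x`. -/

open Real

lemma sin_three_mul_eq_sin_mul (x : ℝ) : sin (3 * x) = sin x * (4 * cos x ^ 2 - 1) := by
  rw [sin_three_mul]
  linear_combination (-4 * sin x) * sin_sq_add_cos_sq x

lemma sin_three_mul_add_sin_div_sin_four_mul {x : ℝ} (h : sin (2 * x) ≠ 0) :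
    (sin (3 * x) + sin x) / sin (4 * x) = cos x / cos (2 * x) := by
  rw [sin_add_sin, show 4 * x = 2 * (2 * x) by ring, sin_two_mul (2 * x),
    show (3 * x + x) / 2 = 2 * x by ring, show (3 * x - x) / 2 = x by ring,
    mul_div_mul_left _ _ (mul_ne_zero two_ne_zero h)]

lemma four_mul_cos_mul_sq_cos_two_mul_add_eq (x : ℝ) :
    4 * cos x * (cos (2 * x) ^ 2 + sin (3 * x) * cos (2 * x) + sin x * sin (3 * x)) =
      3 * cos x + cos (3 * x) + sin (2 * x) + sin (4 * x) + sin (6 * x) := by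
  rw [show 4 * x = 2 * (2 * x) by ring, show 6 * x = 2 * (3 * x) by ring, sin_two_mul (2 * x),
    sin_two_mul (3 * x), sin_three_mul_eq_sin_mul, cos_three_mul, sin_two_mul, cos_two_mul]
  linear_combination 4 * cos x * (4 * cos x ^ 2 - 1) * sin_sq_add_cos_sq x

lemma cos_div_mul_one_add_add_eq {x : ℝ} (h : cos (2 * x) ≠ 0) :
    cos x / cos (2 * x) *
        (1 + sin (3 * x) / cos (2 * x) + sin x / cos (2 * x) * (sin (3 * x) / cos (2 * x))) =
      (3 * cos x + cos (3 * x) + sin (2 * x) + sin (4 * x) + sin (6 * x)) /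
        (3 * cos (2 * x) + cos (6 * x)) := by
  rw [← four_mul_cos_mul_sq_cos_two_mul_add_eq, show 6 * x = 3 * (2 * x) by ring, cos_three_mul]
  field_simp
  ring

theorem theta4kplus3_lower_bound_path_length
    (θ : ℝ) (hθ0 : 0 < θ) (hθ : θ < π / 2) :
    cos (θ / 4) / cos (θ / 2) +
        (cos (θ / 4) / cos (θ / 2)) * (sin (3 * θ / 4) / cos (θ / 2)) +
        (sin (3 * θ / 4) / sin θ) *
          ((sin (θ / 4) / cos (θ / 2)) * (sin (3 * θ / 4) / cos (θ / 2))) +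
        (sin (θ / 4) / sin θ) *
          ((sin (θ / 4) / cos (θ / 2)) * (sin (3 * θ / 4) / cos (θ / 2))) =
      (3 * cos (θ / 4) + cos (3 * θ / 4) + sin (θ / 2) + sin θ + sin (3 * θ / 2)) /
        (3 * cos (θ / 2) + cos (3 * θ / 2)) := by
  obtain ⟨x, rfl⟩ : ∃ x, θ = 4 * x := ⟨θ / 4, by ring⟩
  rw [show 4 * x / 4 = x by ring, show 3 * (4 * x) / 4 = 3 * x by ring,
    show 4 * x / 2 = 2 * x by ring, show 3 * (4 * x) / 2 = 6 * x by ring]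
  have hsin : sin (2 * x) ≠ 0 := (sin_pos_of_pos_of_lt_pi (by linarith) (by linarith)).ne'
  have hcos : cos (2 * x) ≠ 0 := (cos_pos_of_mem_Ioo ⟨by linarith, by linarith⟩).ne'
  rw [← cos_div_mul_one_add_add_eq hcos]
  linear_combination sin x / cos (2 * x) * (sin (3 * x) / cos (2 * x)) *
    sin_three_mul_add_sin_div_sin_four_mul hsin
end

section
/- For every integer k ≥ 1, 1 + 2·sin(π/(4k+8)) / (cos(π/(4k+8)) − sin(π/(4k+8))) < 1 + 2·sin(π/(4k+2)). -/
/-!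
Write `a = π / (n + 6)` and `b = π / n`. The bounds `sin a < a`, `1 - a² / 2 ≤ cos a` and
`b - b³ / 6 < sin b` reduce the comparison to a polynomial inequality in `n` and `π`, which holds
for `n ≥ 6` using only `0 < π ≤ 4`.
-/

open Real

lemma sin_div_cos_sub_sin_lt {a : ℝ} (ha : 0 < a) (h : a + a ^ 2 / 2 < 1) :
    sin a / (cos a - sin a) < a / (1 - a - a ^ 2 / 2) := by
  have hcos : 1 - a ^ 2 / 2 ≤ cos a := one_sub_sq_div_two_le_cos
  have hsin : sin a < a := sin_lt ha
  have hden : 0 < 1 - a - a ^ 2 / 2 := by linarith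
  calc sin a / (cos a - sin a) < a / (cos a - sin a) := by gcongr; linarith
    _ ≤ a / (1 - a - a ^ 2 / 2) := div_le_div_of_nonneg_left ha.le hden (by linarith)

lemma pi_div_add_six_taylor_lt {n : ℝ} (hn : 6 ≤ n) :
    π / (n + 6) / (1 - π / (n + 6) - (π / (n + 6)) ^ 2 / 2) < π / n - (π / n) ^ 3 / 6 := by
  have hpi0 := pi_pos
  have hpi4 := pi_le_four
  have hden : 0 < 2 * (n + 6) ^ 2 - 2 * π * (n + 6) - π ^ 2 := by nlinarith
  have hpoly : 12 * (n + 6) * n ^ 3 < (6 * n ^ 2 - π ^ 2) * (2 * (n + 6) ^ 2 - 2 * π * (n + 6) - π ^ 2) := by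
    nlinarith [mul_nonneg (mul_nonneg (sub_nonneg.2 hn) (sub_nonneg.2 hn)) (sub_nonneg.2 hpi4),
      mul_nonneg (sub_nonneg.2 hn) (sub_nonneg.2 hpi4), mul_pos hpi0 hpi0, pow_pos hpi0 3, pow_pos hpi0 4]
  rw [show π / (n + 6) / (1 - π / (n + 6) - (π / (n + 6)) ^ 2 / 2)
      = 2 * π * (n + 6) / (2 * (n + 6) ^ 2 - 2 * π * (n + 6) - π ^ 2) by field_simp,
    show π / n - (π / n) ^ 3 / 6 = π * (6 * n ^ 2 - π ^ 2) / (6 * n ^ 3) by field_simp,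
    div_lt_div_iff₀ hden (by positivity)]
  nlinarith [mul_lt_mul_of_pos_left hpoly hpi0]

theorem sin_div_cos_sub_sin_lt_sin_pi_div {n : ℝ} (hn : 6 ≤ n) :
    sin (π / (n + 6)) / (cos (π / (n + 6)) - sin (π / (n + 6))) < sin (π / n) := by
  have ha0 : 0 < π / (n + 6) := div_pos pi_pos (by linarith)
  have ha : π / (n + 6) ≤ 1 / 3 := by
    rw [div_le_iff₀ (by linarith)]; linarith [pi_le_four]
  calc _ < π / (n + 6) / (1 - π / (n + 6) - (π / (n + 6)) ^ 2 / 2) :=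
        sin_div_cos_sub_sin_lt ha0 (by nlinarith)
    _ < π / n - (π / n) ^ 3 / 6 := pi_div_add_six_taylor_lt hn
    _ < sin (π / n) := sin_gt_sub_cube (div_pos pi_pos (by linarith))

theorem ub_4kplus8_lt_lb_4kplus2 (k : ℕ) (hk : 1 ≤ k) :
    1 + 2 * sin (π / (4 * (k : ℝ) + 8)) /
        (cos (π / (4 * (k : ℝ) + 8)) - sin (π / (4 * (k : ℝ) + 8))) <
      1 + 2 * sin (π / (4 * (k : ℝ) + 2)) := by
  have hn : (6 : ℝ) ≤ 4 * k + 2 := by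
    have : (1 : ℝ) ≤ k := by exact_mod_cast hk
    linarith
  have key := sin_div_cos_sub_sin_lt_sin_pi_div hn
  rw [show 4 * (k : ℝ) + 8 = 4 * k + 2 + 6 by ring, mul_div_assoc]
  linarith
end

section
/- For every integer k ≥ 1, 1 + 2·sin(π/(4k+8)) / (cos(π/(4k+8)) − sin(π/(4k+8))) < 1 + 2·tan(π/(4k+4)) + 2·tan²(π/(4k+4)). -/
open Real

/-
With `θ = π / (4k + 8)` it suffices to show `sin θ / (cos θ - sin θ) < tan (π / (4k + 4))`.
Replacing `sin θ` by the larger `θ` only increases the left side, and `1 - cos θ ≤ θ² / 2`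
bounds `θ / (cos θ - θ)` by `π / (4k + 4)`, which is less than its tangent.
-/

lemma div_sub_self_lt_div_sub_self {K : Type*} [Field K] [LinearOrder K] [IsStrictOrderedRing K]
    {a x y : K} (ha : 0 < a) (hyx : y < x) (hxa : x < a) : y / (a - y) < x / (a - x) := by
  rw [div_lt_div_iff₀ (by linarith) (by linarith)]
  nlinarith

lemma pi_mul_one_sub_cos_lt {x : ℝ} (hx₀ : 0 < x) (hx : x ≤ 1 / 2) :
    π * (1 - cos x) < (4 - π) * x := by
  have hcos : 1 - x ^ 2 / 2 ≤ cos x := one_sub_sq_div_two_le_cos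
  have hπ : π < 3.15 := pi_lt_d2
  calc π * (1 - cos x) ≤ π * (x ^ 2 / 2) := by gcongr; linarith
    _ = (π * x / 2) * x := by ring
    _ < (4 - π) * x := by gcongr; nlinarith [pi_pos]

lemma sin_div_cos_sub_sin_lt_pi_div {n : ℝ} (hn : 2 * π ≤ n) :
    sin (π / n) / (cos (π / n) - sin (π / n)) < π / (n - 4) := by
  have hn₀ : 0 < n := by linarith [pi_pos]
  have hn₄ : 0 < n - 4 := by linarith [pi_gt_three]
  set x := π / n with hx
  have hx₀ : 0 < x := div_pos pi_pos hn₀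
  have hx_le : x ≤ 1 / 2 := by
    rw [hx, div_le_iff₀ hn₀]; linarith
  have hnx : n * x = π := by rw [hx]; field_simp
  have hcos : 1 - x ^ 2 / 2 ≤ cos x := one_sub_sq_div_two_le_cos
  have hx_lt_cos : x < cos x := by nlinarith
  calc sin x / (cos x - sin x) < x / (cos x - x) :=
        div_sub_self_lt_div_sub_self (hx₀.trans hx_lt_cos) (sin_lt hx₀) hx_lt_cos
    _ < π / (n - 4) := by
        rw [div_lt_div_iff₀ (by linarith) hn₄]
        -- `x * (n - 4) = π - 4 * x`, so this is `π * (1 - cos x) < (4 - π) * x`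
        nlinarith [pi_mul_one_sub_cos_lt hx₀ hx_le]

theorem ub_4kplus8_lt_lb_4kplus4_general (k : ℕ) :
    1 + 2 * sin (π / (4 * (k : ℝ) + 8)) /
        (cos (π / (4 * (k : ℝ) + 8)) - sin (π / (4 * (k : ℝ) + 8))) <
      1 + 2 * tan (π / (4 * (k : ℝ) + 4)) + 2 * tan (π / (4 * (k : ℝ) + 4)) ^ 2 := by
  have hk : (0 : ℝ) ≤ k := k.cast_nonneg
  have hφ₀ : 0 < π / (4 * (k : ℝ) + 4) := div_pos pi_pos (by linarith)
  have hφ : π / (4 * (k : ℝ) + 4) < π / 2 := div_lt_div_of_pos_left pi_pos two_pos (by linarith)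
  have hlhs := sin_div_cos_sub_sin_lt_pi_div (n := 4 * (k : ℝ) + 8) (by linarith [pi_lt_d2])
  rw [show 4 * (k : ℝ) + 8 - 4 = 4 * k + 4 by ring] at hlhs
  rw [mul_div_assoc]
  nlinarith [lt_tan hφ₀ hφ, sq_nonneg (tan (π / (4 * (k : ℝ) + 4)))]

theorem ub_4kplus8_lt_lb_4kplus4 (k : ℕ) (hk : 1 ≤ k) :
    1 + 2 * sin (π / (4 * (k : ℝ) + 8)) /
        (cos (π / (4 * (k : ℝ) + 8)) - sin (π / (4 * (k : ℝ) + 8))) <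
      1 + 2 * tan (π / (4 * (k : ℝ) + 4)) + 2 * tan (π / (4 * (k : ℝ) + 4)) ^ 2 :=
  ub_4kplus8_lt_lb_4kplus4_general k
end

section
/- For every integer k ≥ 2, cos(π/(2·(4k+5))) / (cos(π/(4k+5)) − sin(3π/(2·(4k+5)))) < 1 + 2·sin(π/(4k+2)). -/
/-!
Write `n = 4k + 5`, `u = π / n` and `v = π / (n - 3)`. Bounding `cos` and `sin` by their Taylor
polynomials, and using `π < 3.15` to get `v ≥ 63 u / (63 - 60 u)`, turns the claim into a
polynomial inequality in `u` alone on `(0, 63 / 260]`. The margin at `k = 2` is only about `0.007`,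
so the quartic and quintic Taylor terms cannot be dropped.
-/

open Real Set

lemma cos_le_one_sub_sq_div_two_add_pow_four {x : ℝ} (hx : |x| ≤ 1) :
    cos x ≤ 1 - x ^ 2 / 2 + 5 / 96 * x ^ 4 := by
  have h := (abs_le.1 (cos_bound hx)).2
  rw [(by decide : Even 4).pow_abs] at h
  linarith

lemma sin_le_sub_cube_div_six_add_pow_five {x : ℝ} (hx₀ : 0 ≤ x) (hx₁ : x ≤ 1) :
    sin x ≤ x - x ^ 3 / 6 + x ^ 5 / 100 := by
  have h := (abs_le.1 (sin_bound (abs_le.2 ⟨by linarith, hx₁⟩))).2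
  rw [abs_of_nonneg hx₀] at h
  linarith

lemma monotoneOn_sub_cube_div_six : MonotoneOn (fun x : ℝ => x - x ^ 3 / 6) (Icc 0 1) := by
  rintro a ⟨ha₀, ha₁⟩ b ⟨hb₀, hb₁⟩ hab
  have h : a ^ 2 + a * b + b ^ 2 ≤ 3 := by nlinarith
  dsimp only
  nlinarith [mul_nonneg (sub_nonneg.2 hab) (sub_nonneg.2 h)]

lemma cos_sub_sin_three_mul_div_two_pos {u : ℝ} (hu₀ : 0 ≤ u) (hu₁ : u ≤ 1 / 2) :
    0 < cos u - sin (3 * u / 2) := by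
  nlinarith [one_sub_sq_div_two_le_cos (x := u), sin_le (x := 3 * u / 2) (by positivity)]

/- The main inequality at `v = 63 u / (63 - 60 u)`, with `cos` and `sin` replaced by their Taylor
bounds and multiplied by `(63 - 60 u) ^ 3`. -/
lemma taylor_polynomial_ineq {u : ℝ} (hu₀ : 0 < u) (hu₁ : u ≤ 63 / 260) :
    (63 - 60 * u) ^ 3 * (1 - (u / 2) ^ 2 / 2 + 5 / 96 * (u / 2) ^ 4) <
      ((63 - 60 * u) ^ 3 + 126 * u * (63 - 60 * u) ^ 2 - 63 ^ 3 * u ^ 3 / 3) *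
        (1 - u ^ 2 / 2 - (3 * u / 2 - (3 * u / 2) ^ 3 / 6 + (3 * u / 2) ^ 5 / 100)) := by
  nlinarith [mul_nonneg (sub_nonneg.2 hu₁) hu₀.le, pow_pos hu₀ 2, pow_pos hu₀ 3, pow_pos hu₀ 4,
    pow_pos hu₀ 5, pow_pos hu₀ 6, pow_pos hu₀ 7]

lemma cos_half_lt_one_add_two_sin_mul {u v : ℝ} (hu₀ : 0 < u) (hu₁ : u ≤ 63 / 260) (hv : v ≤ 1)
    (huv : 63 * u ≤ (63 - 60 * u) * v) :
    cos (u / 2) < (1 + 2 * sin v) * (cos u - sin (3 * u / 2)) := by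
  have hpoly := taylor_polynomial_ineq hu₀ hu₁
  set w := 63 - 60 * u
  have hw : 0 < w := by linarith
  set D := 1 - u ^ 2 / 2 - (3 * u / 2 - (3 * u / 2) ^ 3 / 6 + (3 * u / 2) ^ 5 / 100) with hD_def
  have hD : 0 ≤ D := by
    have h : (3 * u / 2) ^ 5 ≤ 1 := pow_le_one₀ (by positivity) (by linarith)
    nlinarith [pow_pos hu₀ 3]
  have hD_le : D ≤ cos u - sin (3 * u / 2) := by
    linarith [one_sub_sq_div_two_le_cos (x := u),
      sin_le_sub_cube_div_six_add_pow_five (x := 3 * u / 2) (by positivity) (by linarith)]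
  set v₀ := 63 * u / w with hv₀_def
  have hv₀ : 0 ≤ v₀ := by positivity
  have hv₀v : v₀ ≤ v := by rwa [div_le_iff₀' hw]
  have hg : 1 + 2 * (v₀ - v₀ ^ 3 / 6) ≤ 1 + 2 * sin v := by
    have := monotoneOn_sub_cube_div_six ⟨hv₀, hv₀v.trans hv⟩ ⟨hv₀.trans hv₀v, hv⟩ hv₀v
    linarith [sin_ge_sub_cube (hv₀.trans hv₀v)]
  have hg_eq : 1 + 2 * (v₀ - v₀ ^ 3 / 6) =
      (w ^ 3 + 126 * u * w ^ 2 - 63 ^ 3 * u ^ 3 / 3) / w ^ 3 := by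
    rw [hv₀_def]
    field_simp
    ring
  calc cos (u / 2) ≤ 1 - (u / 2) ^ 2 / 2 + 5 / 96 * (u / 2) ^ 4 :=
        cos_le_one_sub_sq_div_two_add_pow_four (by rw [abs_of_pos (by positivity)]; linarith)
    _ < (1 + 2 * (v₀ - v₀ ^ 3 / 6)) * D := by
        rw [hg_eq, div_mul_eq_mul_div _ (w ^ 3) D, lt_div_iff₀ (by positivity)]
        linarith
    _ ≤ (1 + 2 * sin v) * (cos u - sin (3 * u / 2)) :=
      mul_le_mul hg hD_le hD
        (by linarith [sin_nonneg_of_nonneg_of_le_pi (hv₀.trans hv₀v) (by linarith [pi_gt_three])])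

theorem cos_div_cos_sub_sin_lt_one_add_two_sin {n : ℝ} (hn : 13 ≤ n) :
    cos (π / (2 * n)) / (cos (π / n) - sin (3 * π / (2 * n))) < 1 + 2 * sin (π / (n - 3)) := by
  have hπ := pi_lt_d2
  have hn₀ : 0 < n := by linarith
  have hn₃ : 0 < n - 3 := by linarith
  set u := π / n with hu_def
  have hu₀ : 0 < u := by positivity
  have hu₁ : u ≤ 63 / 260 := by rw [div_le_iff₀ hn₀]; linarith
  have hv : π / (n - 3) ≤ 1 := by rw [div_le_one hn₃]; linarith
  -- this is where `π < 3.15` enters: the constraint amounts to `60 π ≤ 189`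
  have huv : 63 * u ≤ (63 - 60 * u) * (π / (n - 3)) := by
    have e : (63 - 60 * u) * (π / (n - 3)) - 63 * u = π * (189 - 60 * π) / (n * (n - 3)) := by
      rw [hu_def]
      field_simp
      ring
    have : 0 ≤ π * (189 - 60 * π) / (n * (n - 3)) := by
      apply div_nonneg <;> nlinarith [pi_pos]
    linarith
  rw [show π / (2 * n) = u / 2 by ring, show 3 * π / (2 * n) = 3 * u / 2 by ring,
    div_lt_iff₀ (cos_sub_sin_three_mul_div_two_pos hu₀.le (by linarith))]
  exact cos_half_lt_one_add_two_sin_mul hu₀ hu₁ hv huv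

theorem ub_4kplus5_lt_lb_4kplus2 (k : ℕ) (hk : 2 ≤ k) :
    cos (π / (2 * (4 * (k : ℝ) + 5))) /
        (cos (π / (4 * (k : ℝ) + 5)) - sin (3 * π / (2 * (4 * (k : ℝ) + 5)))) <
      1 + 2 * sin (π / (4 * (k : ℝ) + 2)) := by
  have hk' : (2 : ℝ) ≤ k := by exact_mod_cast hk
  have h := cos_div_cos_sub_sin_lt_one_add_two_sin (n := 4 * (k : ℝ) + 5) (by linarith)
  rwa [show 4 * (k : ℝ) + 5 - 3 = 4 * k + 2 by ring] at h
end

section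
/- For every integer k ≥ 1, cos(π/(2·(4k+7))) / (cos(π/(4k+7)) − sin(3π/(2·(4k+7)))) < (3·cos(π/(2·(4k+3))) + cos(3π/(2·(4k+3))) + sin(π/(4k+3)) + sin(2π/(4k+3)) + sin(3π/(4k+3))) / (3·cos(π/(4k+3)) + cos(3π/(4k+3))). -/
/-!
Write `x = π / (2n)` and `y = π / (2(n - 4))` with `n = 4k + 7`, so that `x (π + 8y) = π y`.
The left-hand side is `cos x / (cos 2x - sin 3x) < 1 / (1 - 3x - 2x²) ≈ 1 + 3x + 11x²`, and
replacing every sine and cosine on the right-hand side by a Taylor bound shows that it is at least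
`(4 + 12y - 6y² - 48y³) / (4 - 24y² + 56y⁴) ≈ 1 + 3y + 4.5y²`. Since `y - x = 8xy / π ≈ 2.55 y²`,
the gap `3(y - x) ≈ 7.6 y²` beats the difference of the quadratic terms; with `π < 3.15` this
becomes a polynomial inequality in `y` on `0 < y ≤ π / 14`, valid already for `k = 1`.
-/

open Real

theorem Real.cos_le_one_sub_sq_div_two_add_pow_four_div (x : ℝ) :
    cos x ≤ 1 - x ^ 2 / 2 + x ^ 4 / 24 := by
  wlog hx₀ : 0 ≤ x generalizing x
  · simpa [Even.neg_pow, even_two, (by decide : Even 4)] using this (-x) (by linarith)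
  rcases le_or_gt (x ^ 2) 12 with hx | hx
  · obtain ⟨s, rfl⟩ : ∃ s, x = 2 * s := ⟨x / 2, by ring⟩
    have hs₀ : 0 ≤ s - s ^ 3 / 6 := by nlinarith
    have hsin := pow_le_pow_left₀ hs₀ (sin_ge_sub_cube (by linarith)) 2
    rw [cos_two_mul_eq_one_sub]
    nlinarith [sq_nonneg (s ^ 3)]
  · nlinarith [cos_le_one x]

theorem cos_div_cos_two_mul_sub_sin_three_mul_lt {x : ℝ} (hx : 0 < x)
    (hA : 0 < 1 - 3 * x - 2 * x ^ 2) :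
    cos x / (cos (2 * x) - sin (3 * x)) < 1 / (1 - 3 * x - 2 * x ^ 2) := by
  have hden : 1 - 3 * x - 2 * x ^ 2 < cos (2 * x) - sin (3 * x) := by
    linarith [one_sub_sq_div_two_le_cos (x := 2 * x), sin_lt (by linarith : 0 < 3 * x)]
  rw [div_lt_div_iff₀ (by linarith) hA]
  nlinarith [cos_le_one x]

/-- With `y = π / (2m)`, `lowerBoundNum y / lowerBoundDen y` is the lower bound on the worst-case
spanning ratio of the θ-graph with `m` cones. -/
noncomputable def lowerBoundNum (y : ℝ) : ℝ :=
  3 * cos y + cos (3 * y) + sin (2 * y) + sin (4 * y) + sin (6 * y)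

noncomputable def lowerBoundDen (y : ℝ) : ℝ :=
  3 * cos (2 * y) + cos (6 * y)

theorem sub_le_lowerBoundNum {y : ℝ} (hy : 0 ≤ y) :
    4 + 12 * y - 6 * y ^ 2 - 48 * y ^ 3 ≤ lowerBoundNum y := by
  unfold lowerBoundNum
  linarith [one_sub_sq_div_two_le_cos (x := y), one_sub_sq_div_two_le_cos (x := 3 * y),
    sin_ge_sub_cube (by linarith : 0 ≤ 2 * y), sin_ge_sub_cube (by linarith : 0 ≤ 4 * y),
    sin_ge_sub_cube (by linarith : 0 ≤ 6 * y)]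

theorem sub_le_lowerBoundDen (y : ℝ) : 4 - 24 * y ^ 2 ≤ lowerBoundDen y := by
  unfold lowerBoundDen
  linarith [one_sub_sq_div_two_le_cos (x := 2 * y), one_sub_sq_div_two_le_cos (x := 6 * y)]

theorem lowerBoundDen_le (y : ℝ) : lowerBoundDen y ≤ 4 - 24 * y ^ 2 + 56 * y ^ 4 := by
  unfold lowerBoundDen
  linarith [cos_le_one_sub_sq_div_two_add_pow_four_div (2 * y),
    cos_le_one_sub_sq_div_two_add_pow_four_div (6 * y)]

theorem taylor_polynomials_lt {x y : ℝ} (hx : 0 < x) (hy : 0 < y) (hy' : y ≤ 9 / 40)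
    (hxy : x * (63 / 20 + 8 * y) ≤ 63 / 20 * y) :
    4 - 24 * y ^ 2 + 56 * y ^ 4 <
      (4 + 12 * y - 6 * y ^ 2 - 48 * y ^ 3) * (1 - 3 * x - 2 * x ^ 2) := by
  have hc : 0 < 63 / 20 + 8 * y := by positivity
  -- the worst case is `x = 63 y / (63 + 160 y)`
  have hA : (63 / 20 + 8 * y) ^ 2 - 3 * (63 / 20 * y) * (63 / 20 + 8 * y) - 2 * (63 / 20 * y) ^ 2 ≤
      (63 / 20 + 8 * y) ^ 2 * (1 - 3 * x - 2 * x ^ 2) := by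
    nlinarith [mul_pos hx hc]
  have hN : 0 < 4 + 12 * y - 6 * y ^ 2 - 48 * y ^ 3 := by nlinarith
  -- `y ^ 2` times this polynomial is `(4 + 12y - 6y² - 48y³)` times the left side of `hA`,
  -- minus `(63 / 20 + 8y)² (4 - 24y² + 56y⁴)`
  have hQ : 0 < 44.415 + 232.185 * y + 178.65 * y ^ 2 - 1313.04 * y ^ 3 - 3584 * y ^ 4 := by
    have h2 : y ^ 2 ≤ 9 / 40 * y := by nlinarith
    have h3 : y ^ 3 ≤ 81 / 1600 * y := by nlinarith
    have h4 : y ^ 4 ≤ 729 / 64000 * y := by nlinarith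
    linarith [sq_nonneg y]
  refine lt_of_mul_lt_mul_left (a := (63 / 20 + 8 * y) ^ 2) ?_ (by positivity)
  linarith [mul_le_mul_of_nonneg_left hA hN.le, mul_pos (pow_pos hy 2) hQ]

theorem cos_div_cos_two_mul_sub_sin_three_mul_lt_lowerBound {x y : ℝ} (hx : 0 < x) (hy : 0 < y)
    (hxy : x * (π + 8 * y) = π * y) (hy' : y ≤ π / 14) :
    cos x / (cos (2 * x) - sin (3 * x)) < lowerBoundNum y / lowerBoundDen y := by
  have hπ := pi_lt_d2
  have hx_lt : x < y := by nlinarith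
  have hx_le : x * (63 / 20 + 8 * y) ≤ 63 / 20 * y := by nlinarith
  have hA : 0 < 1 - 3 * x - 2 * x ^ 2 := by nlinarith
  have hN : 0 ≤ 4 + 12 * y - 6 * y ^ 2 - 48 * y ^ 3 := by nlinarith
  have hD : 0 < 4 - 24 * y ^ 2 + 56 * y ^ 4 := by nlinarith
  calc cos x / (cos (2 * x) - sin (3 * x)) < 1 / (1 - 3 * x - 2 * x ^ 2) :=
        cos_div_cos_two_mul_sub_sin_three_mul_lt hx hA
    _ < (4 + 12 * y - 6 * y ^ 2 - 48 * y ^ 3) / (4 - 24 * y ^ 2 + 56 * y ^ 4) := by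
        rw [div_lt_div_iff₀ hA hD, one_mul]
        exact taylor_polynomials_lt hx hy (by linarith) hx_le
    _ ≤ lowerBoundNum y / lowerBoundDen y :=
        div_le_div₀ (hN.trans (sub_le_lowerBoundNum hy.le)) (sub_le_lowerBoundNum hy.le)
          (by nlinarith [sub_le_lowerBoundDen y]) (lowerBoundDen_le y)

theorem ub_4kplus7_lt_lb_4kplus3 (k : ℕ) (hk : 1 ≤ k) :
    cos (π / (2 * (4 * (k : ℝ) + 7))) /
        (cos (π / (4 * (k : ℝ) + 7)) - sin (3 * π / (2 * (4 * (k : ℝ) + 7)))) <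
      (3 * cos (π / (2 * (4 * (k : ℝ) + 3))) + cos (3 * π / (2 * (4 * (k : ℝ) + 3))) +
          sin (π / (4 * (k : ℝ) + 3)) + sin (2 * π / (4 * (k : ℝ) + 3)) +
          sin (3 * π / (4 * (k : ℝ) + 3))) /
        (3 * cos (π / (4 * (k : ℝ) + 3)) + cos (3 * π / (4 * (k : ℝ) + 3))) := by
  have hk' : (1 : ℝ) ≤ k := by exact_mod_cast hk
  have h := cos_div_cos_two_mul_sub_sin_three_mul_lt_lowerBound
    (x := π / (2 * (4 * (k : ℝ) + 7))) (y := π / (2 * (4 * (k : ℝ) + 3)))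
    (by positivity) (by positivity) (by field_simp; ring)
    (div_le_div_of_nonneg_left pi_pos.le (by norm_num) (by linarith))
  unfold lowerBoundNum lowerBoundDen at h
  convert h using 7 <;> field_simp <;> ring
end
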